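/- arXiv:1406.7748 — 5 statements merged into one kernel-verified Lean document; each statement's English description precedes it below -/
import Mathlib

section
/- Let V be a Banach space, T > 0 and z₁,z₂ > 1. Let h ∈ 𝒞𝒞_{3,3}(V) be such that h = δg for some g ∈ 𝒞𝒞_{2,2}(V) and ‖h‖_{z₁,z₂} < ∞. Then there exists r ∈ 𝒞𝒞_{2,2}(V) with δr = h and ‖r‖_{z₁,z₂} ≤ (2^{z₁}−2)^{−1}(2^{z₂}−2)^{−1} ‖h‖_{z₁,z₂}; moreover r is unique, in the sense that any r′ ∈ 𝒞𝒞_{2,2}(V) with δr′ = h and ‖r′‖_{w₁,w₂} < ∞ for some w₁,w₂ > 1 equals r. (r = Λh, the two-dimensional sewing map.) -/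
/-!
Sewing in one variable: if `‖δφ(x, u, y)‖ ≤ κ D ^ z` with `z > 1` whenever both gaps are at most
`D`, the Riemann sums of `φ` over the dyadic partitions of `[a, b]` converge, the `n`-th
refinement moving them by at most `κ (|b - a| / 2) ^ z 2 ^ (n (1 - z))`; summing this geometric
series gives `‖φ a b - sew φ a b‖ ≤ (2 ^ z - 2)⁻¹ κ |b - a| ^ z`. The limit `sew φ` is additive:
at the rational points of `[a, b]` by comparing partitions, elsewhere by continuity.

Two variables: sewing `δ₁g` in `t` leaves a remainder `R` with `δ₂R = δg` and
`‖R‖ ≤ (2 ^ z₂ - 2)⁻¹ κ D ^ z₁ |t₂ - t₁| ^ z₂`. Sewing is linear and `δ₁g` is `δ₁`-closed, so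
`R = δ₁Q` with `Q = R(0, ·, ·)`; sewing `Q` in `s` yields `r` with `δ₁r = R`, hence `δr = δg`,
with the product of the two constants. Uniqueness: an additive function which is
`O(|b - a| ^ w)` with `w > 1` vanishes; apply this in `t` to `δ₁(r' - r)`, then in `s` to `r' - r`.
-/

open Set

section
variable {V : Type*} [NormedAddCommGroup V]

/-- `δ₁a` for `a ∈ 𝒞𝒞_{2,2}(V)`. -/
def del1 (a : ℝ → ℝ → ℝ → ℝ → V) (s₁ u s₂ t₁ t₂ : ℝ) : V :=
  a u s₂ t₁ t₂ - a s₁ s₂ t₁ t₂ + a s₁ u t₁ t₂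

/-- `δa = δ₂δ₁a ∈ 𝒞𝒞_{3,3}(V)` for `a ∈ 𝒞𝒞_{2,2}(V)`. -/
def delFull (a : ℝ → ℝ → ℝ → ℝ → V) (s₁ u₁ s₂ t₁ u₂ t₂ : ℝ) : V :=
  del1 a s₁ u₁ s₂ u₂ t₂ - del1 a s₁ u₁ s₂ t₁ t₂ + del1 a s₁ u₁ s₂ t₁ u₂

end

open Filter Topology

noncomputable section

namespace Sewing

variable {V : Type*} [NormedAddCommGroup V]

/-- The coboundary `δφ(x, u, y)` in the sign convention of `del1`: definitionally,
`del1 a s₁ u s₂ t₁ t₂ = cobound (a · · t₁ t₂) s₁ u s₂` and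
`delFull a s₁ u s₂ t₁ v t₂ = cobound (del1 a s₁ u s₂) t₁ v t₂`. -/
def cobound (φ : ℝ → ℝ → V) (x u y : ℝ) : V := φ u y - φ x y + φ x u

def CoboundBound (T z κ : ℝ) (φ : ℝ → ℝ → V) : Prop :=
  ∀ ⦃x u y D : ℝ⦄, x ∈ Icc 0 T → u ∈ Icc 0 T → y ∈ Icc 0 T → |u - x| ≤ D → |y - u| ≤ D →
    ‖cobound φ x u y‖ ≤ κ * D ^ z

def partitionPt (a b : ℝ) (k i : ℕ) : ℝ := a + i * (b - a) / k

def riemannSum (φ : ℝ → ℝ → V) (k : ℕ) (a b : ℝ) : V :=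
  ∑ i ∈ Finset.range k, φ (partitionPt a b k i) (partitionPt a b k (i + 1))

lemma sum_range_mul_eq_sum_sum {M : Type*} [AddCommMonoid M] (f : ℕ → M) (k q : ℕ) :
    ∑ n ∈ Finset.range (k * q), f n
      = ∑ i ∈ Finset.range k, ∑ j ∈ Finset.range q, f (i * q + j) := by
  induction k with
  | zero => simp
  | succ k ih => rw [Nat.succ_mul, Finset.sum_range_add, ih, Finset.sum_range_succ]

lemma mem_uIcc_or_mem_uIcc_or_mem_uIcc (a u b : ℝ) :
    u ∈ uIcc a b ∨ a ∈ uIcc u b ∨ b ∈ uIcc a u := by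
  simp only [mem_uIcc]
  rcases le_total a u with h₁ | h₁ <;> rcases le_total u b with h₂ | h₂ <;>
    rcases le_total a b with h₃ | h₃ <;> tauto

lemma norm_sum_range_le_mul {f : ℕ → V} {k : ℕ} {β : ℝ} (hf : ∀ i < k, ‖f i‖ ≤ β) :
    ‖∑ i ∈ Finset.range k, f i‖ ≤ k * β := by
  simpa using norm_sum_le_of_le _ fun i hi => hf i (Finset.mem_range.1 hi)

lemma abs_sub_le_of_mem_Icc {T a b : ℝ} (ha : a ∈ Icc 0 T) (hb : b ∈ Icc 0 T) : |b - a| ≤ T :=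
  abs_sub_le_of_nonneg_of_le hb.1 hb.2 ha.1 ha.2

lemma rpow_le_mul_rpow_of_le {d T v w : ℝ} (hd : 0 ≤ d) (hdT : d ≤ T) (hv : 0 < v)
    (hvw : v ≤ w) : d ^ w ≤ T ^ (w - v) * d ^ v := calc
  d ^ w = d ^ (w - v + v) := by rw [sub_add_cancel]
  _ = d ^ (w - v) * d ^ v := Real.rpow_add' hd (by linarith)
  _ ≤ T ^ (w - v) * d ^ v := by gcongr

lemma rpow_mul_rpow_le {x y D γ z : ℝ} (hx : 0 ≤ x) (hy : 0 ≤ y) (hxD : x ≤ D) (hyD : y ≤ D)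
    (hγ : 0 ≤ γ) (hγz : γ ≤ z) (hz : 0 < z) : x ^ γ * y ^ (z - γ) ≤ D ^ z := by
  have hD : 0 ≤ D := hx.trans hxD
  calc x ^ γ * y ^ (z - γ) ≤ D ^ γ * D ^ (z - γ) := by gcongr
    _ = D ^ z := by rw [← Real.rpow_add' hD (by linarith), add_sub_cancel]

lemma two_lt_two_rpow {z : ℝ} (hz : 1 < z) : 2 < (2 : ℝ) ^ z := by
  simpa using Real.rpow_lt_rpow_of_exponent_lt one_lt_two hz

lemma inv_two_rpow_sub_two_nonneg {z : ℝ} (hz : 1 < z) : 0 ≤ ((2 : ℝ) ^ z - 2)⁻¹ :=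
  inv_nonneg.2 (sub_nonneg.2 (two_lt_two_rpow hz).le)

lemma two_rpow_one_sub_lt_one {z : ℝ} (hz : 1 < z) : (2 : ℝ) ^ (1 - z) < 1 :=
  Real.rpow_lt_one_of_one_lt_of_neg one_lt_two (by linarith)

lemma tendsto_mul_two_rpow_one_sub_pow {z : ℝ} (hz : 1 < z) (c : ℝ) :
    Tendsto (fun n : ℕ => c * ((2 : ℝ) ^ (1 - z)) ^ n) atTop (𝓝 0) := by
  simpa using (tendsto_pow_atTop_nhds_zero_of_lt_one (by positivity)
    (two_rpow_one_sub_lt_one hz)).const_mul c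

lemma two_pow_mul_div_two_pow_rpow {c : ℝ} (hc : 0 ≤ c) (z : ℝ) (n : ℕ) :
    (2 : ℝ) ^ n * (c / 2 ^ n) ^ z = c ^ z * ((2 : ℝ) ^ (1 - z)) ^ n := by
  rw [Real.div_rpow hc (by positivity), ← Real.rpow_pow_comm zero_le_two, Real.rpow_sub two_pos,
    Real.rpow_one, div_pow]
  field_simp

section PartitionPt

variable {k i : ℕ}

@[simp] lemma partitionPt_zero (a b : ℝ) : partitionPt a b k 0 = a := by
  simp [partitionPt]

lemma partitionPt_self (a b : ℝ) (hk : k ≠ 0) : partitionPt a b k k = b := by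
  rw [partitionPt, mul_div_cancel_left₀ _ (Nat.cast_ne_zero.2 hk)]
  ring

lemma partitionPt_succ_sub (a b : ℝ) (k i : ℕ) :
    partitionPt a b k (i + 1) - partitionPt a b k i = (b - a) / k := by
  simp only [partitionPt]
  push_cast
  ring

lemma abs_partitionPt_succ_sub (a b : ℝ) (k i : ℕ) :
    |partitionPt a b k (i + 1) - partitionPt a b k i| = |b - a| / k := by
  rw [partitionPt_succ_sub, abs_div, Nat.abs_cast]

lemma partitionPt_mem_uIcc (a b : ℝ) (hik : i ≤ k) : partitionPt a b k i ∈ uIcc a b := by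
  have ht : (i / k : ℝ) ∈ Icc (0 : ℝ) 1 :=
    ⟨by positivity, div_le_one_of_le₀ (by exact_mod_cast hik) k.cast_nonneg⟩
  convert (convex_uIcc a b).add_smul_sub_mem left_mem_uIcc right_mem_uIcc ht using 1
  simp only [partitionPt, smul_eq_mul]
  ring

lemma partitionPt_mem {T a b : ℝ} (ha : a ∈ Icc 0 T) (hb : b ∈ Icc 0 T) (hik : i ≤ k) :
    partitionPt a b k i ∈ Icc 0 T :=
  uIcc_subset_Icc ha hb (partitionPt_mem_uIcc a b hik)

lemma partitionPt_mul_mul (a b : ℝ) {m : ℕ} (hm : m ≠ 0) :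
    partitionPt a b (m * k) (m * i) = partitionPt a b k i := by
  have hm' : (m : ℝ) ≠ 0 := Nat.cast_ne_zero.2 hm
  simp only [partitionPt]
  push_cast
  rw [mul_assoc, mul_div_mul_left _ _ hm']

lemma partitionPt_partitionPt (a b : ℝ) {q : ℕ} (hk : k ≠ 0) (hq : q ≠ 0) (i j : ℕ) :
    partitionPt (partitionPt a b k i) (partitionPt a b k (i + 1)) q j
      = partitionPt a b (k * q) (i * q + j) := by
  have hk' : (k : ℝ) ≠ 0 := Nat.cast_ne_zero.2 hk
  have hq' : (q : ℝ) ≠ 0 := Nat.cast_ne_zero.2 hq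
  simp only [partitionPt]
  push_cast
  field_simp
  ring

lemma partitionPt_swap (a b : ℝ) (hk : k ≠ 0) (hik : i ≤ k) :
    partitionPt b a k i = partitionPt a b k (k - i) := by
  have hk' : (k : ℝ) ≠ 0 := Nat.cast_ne_zero.2 hk
  simp only [partitionPt, Nat.cast_sub hik]
  field_simp
  ring

end PartitionPt

section RiemannSum

variable (φ : ℝ → ℝ → V) (a b : ℝ)

lemma riemannSum_one : riemannSum φ 1 a b = φ a b := by
  simp [riemannSum, partitionPt_self a b one_ne_zero]

lemma riemannSum_two :
    riemannSum φ 2 a b = φ a (partitionPt a b 2 1) + φ (partitionPt a b 2 1) b := by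
  simp [riemannSum, Finset.sum_range_succ, partitionPt_self a b two_ne_zero]

lemma riemannSum_add {p s : ℕ} (hp : p ≠ 0) (hs : s ≠ 0) :
    riemannSum φ (p + s) a b = riemannSum φ p a (partitionPt a b (p + s) p)
      + riemannSum φ s (partitionPt a b (p + s) p) b := by
  have hps : ((p : ℝ) + s) ≠ 0 := by positivity
  have hp' : (p : ℝ) ≠ 0 := Nat.cast_ne_zero.2 hp
  have hs' : (s : ℝ) ≠ 0 := Nat.cast_ne_zero.2 hs
  have h₁ (i : ℕ) :
      partitionPt a (partitionPt a b (p + s) p) p i = partitionPt a b (p + s) i := by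
    simp only [partitionPt]; push_cast; field_simp; ring
  have h₂ (j : ℕ) :
      partitionPt (partitionPt a b (p + s) p) b s j = partitionPt a b (p + s) (p + j) := by
    simp only [partitionPt]; push_cast; field_simp; ring
  simp only [riemannSum, Finset.sum_range_add, h₁, h₂, add_assoc]

lemma riemannSum_mul (k : ℕ) {q : ℕ} (hq : q ≠ 0) :
    riemannSum φ (k * q) a b = ∑ i ∈ Finset.range k,
      riemannSum φ q (partitionPt a b k i) (partitionPt a b k (i + 1)) := by
  rw [riemannSum, sum_range_mul_eq_sum_sum]
  refine Finset.sum_congr rfl fun i hi => ?_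
  have hk : k ≠ 0 := Nat.ne_zero_of_lt (Finset.mem_range.1 hi)
  simp only [riemannSum, partitionPt_partitionPt a b hk hq, add_assoc]

lemma riemannSum_swap {k : ℕ} (hk : k ≠ 0) :
    riemannSum φ k b a
      = ∑ i ∈ Finset.range k, φ (partitionPt a b k (i + 1)) (partitionPt a b k i) := by
  rw [riemannSum, ← Finset.sum_range_reflect]
  refine Finset.sum_congr rfl fun i hi => ?_
  have hi := Finset.mem_range.1 hi
  rw [partitionPt_swap a b hk (by omega), partitionPt_swap a b hk (by omega),
    show k - (k - 1 - i) = i + 1 by omega, show k - (k - 1 - i + 1) = i by omega]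

lemma riemannSum_sub_eq_sum_cobound {k : ℕ} (hk : k ≠ 0) :
    riemannSum φ k a b - φ a b = ∑ i ∈ Finset.range k,
      cobound φ a (partitionPt a b k i) (partitionPt a b k (i + 1)) - φ a a := by
  have h : ∑ i ∈ Finset.range k, cobound φ a (partitionPt a b k i) (partitionPt a b k (i + 1))
      = riemannSum φ k a b - ∑ i ∈ Finset.range k,
        (φ a (partitionPt a b k (i + 1)) - φ a (partitionPt a b k i)) := by
    rw [riemannSum, ← Finset.sum_sub_distrib]
    exact Finset.sum_congr rfl fun i _ => by simp only [cobound]; abel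
  rw [h, Finset.sum_range_sub (fun i => φ a (partitionPt a b k i)), partitionPt_zero,
    partitionPt_self a b hk]
  abel

end RiemannSum

section Estimates

variable {T z κ : ℝ} {φ : ℝ → ℝ → V} {a b : ℝ}

lemma CoboundBound.mono {κ' : ℝ} (hφ : CoboundBound T z κ φ) (hκ : κ ≤ κ') :
    CoboundBound T z κ' φ := fun _ _ _ _ hx hu hy h₁ h₂ =>
  (hφ hx hu hy h₁ h₂).trans
    (mul_le_mul_of_nonneg_right hκ (Real.rpow_nonneg ((abs_nonneg _).trans h₁) _))

lemma norm_riemannSum_sub_le (hφ : CoboundBound T z κ φ) (hdiag : φ a a = 0)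
    (ha : a ∈ Icc 0 T) (hb : b ∈ Icc 0 T) {q : ℕ} (hq : q ≠ 0) :
    ‖riemannSum φ q a b - φ a b‖ ≤ q * (κ * |b - a| ^ z) := by
  rw [riemannSum_sub_eq_sum_cobound φ a b hq, hdiag, sub_zero]
  refine norm_sum_range_le_mul fun i hi => hφ ha (partitionPt_mem ha hb hi.le)
    (partitionPt_mem ha hb hi) (abs_sub_left_of_mem_uIcc (partitionPt_mem_uIcc a b hi.le)) ?_
  rw [abs_partitionPt_succ_sub]
  exact div_le_self (abs_nonneg _) (Nat.one_le_cast.2 (Nat.one_le_iff_ne_zero.2 hq))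

lemma norm_riemannSum_two_sub_le (hφ : CoboundBound T z κ φ) (ha : a ∈ Icc 0 T)
    (hb : b ∈ Icc 0 T) : ‖riemannSum φ 2 a b - φ a b‖ ≤ κ * (|b - a| / 2) ^ z := by
  have hgap (i : ℕ) : |partitionPt a b 2 (i + 1) - partitionPt a b 2 i| ≤ |b - a| / 2 := by
    rw [abs_partitionPt_succ_sub]; norm_num
  have h := hφ ha (partitionPt_mem ha hb one_le_two) hb
    (by simpa using hgap 0) (by simpa [partitionPt_self a b two_ne_zero] using hgap 1)
  convert h using 2
  rw [riemannSum_two, cobound]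
  abel

lemma norm_riemannSum_mul_sub_le {K q : ℕ} (hq : q ≠ 0) {β : ℝ} (ha : a ∈ Icc 0 T)
    (hb : b ∈ Icc 0 T) (hβ : ∀ x ∈ Icc 0 T, ∀ y ∈ Icc 0 T, |y - x| = |b - a| / K →
      ‖riemannSum φ q x y - φ x y‖ ≤ β) :
    ‖riemannSum φ (K * q) a b - riemannSum φ K a b‖ ≤ K * β := by
  rw [riemannSum_mul φ a b K hq, riemannSum, ← Finset.sum_sub_distrib]
  exact norm_sum_range_le_mul fun i hi => hβ _ (partitionPt_mem ha hb hi.le) _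
    (partitionPt_mem ha hb hi) (abs_partitionPt_succ_sub a b K i)

lemma dist_riemannSum_two_pow_succ_le (hφ : CoboundBound T z κ φ) (ha : a ∈ Icc 0 T)
    (hb : b ∈ Icc 0 T) (n : ℕ) :
    dist (riemannSum φ (2 ^ n) a b) (riemannSum φ (2 ^ (n + 1)) a b)
      ≤ κ * (|b - a| / 2) ^ z * ((2 : ℝ) ^ (1 - z)) ^ n := by
  rw [dist_comm, dist_eq_norm, pow_succ]
  refine (norm_riemannSum_mul_sub_le two_ne_zero ha hb fun x hx y hy hxy =>
    (norm_riemannSum_two_sub_le hφ hx hy).trans_eq (by rw [hxy])).trans_eq ?_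
  rw [Nat.cast_pow, Nat.cast_ofNat, div_right_comm, mul_left_comm,
    two_pow_mul_div_two_pow_rpow (by positivity), mul_assoc]

/-- Split `[a, b]` into `2 ^ n` cells: the bounds add up to `c |b - a| ^ w 2 ^ (n (1 - w))`. -/
lemma eq_zero_of_cobound_eq_zero {A : ℝ → ℝ → V} {c w : ℝ} (hw : 1 < w)
    (hA : ∀ x u y, x ∈ Icc 0 T → u ∈ Icc 0 T → y ∈ Icc 0 T → cobound A x u y = 0)
    (hbd : ∀ x y, x ∈ Icc 0 T → y ∈ Icc 0 T → ‖A x y‖ ≤ c * |y - x| ^ w)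
    (ha : a ∈ Icc 0 T) (hb : b ∈ Icc 0 T) : A a b = 0 := by
  have hsum (n : ℕ) : riemannSum A (2 ^ n) a b = A a b := by
    have haa : A a a = 0 := by
      have h := hA a a a ha ha ha
      rwa [cobound, sub_self, zero_add] at h
    have h := riemannSum_sub_eq_sum_cobound A a b (pow_ne_zero n two_ne_zero)
    rw [Finset.sum_eq_zero fun i hi => hA _ _ _ ha (partitionPt_mem ha hb
      (Finset.mem_range.1 hi).le) (partitionPt_mem ha hb (Finset.mem_range.1 hi)), haa,
      sub_zero] at h
    exact sub_eq_zero.1 h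
  have hle (n : ℕ) : ‖A a b‖ ≤ c * |b - a| ^ w * ((2 : ℝ) ^ (1 - w)) ^ n := calc
    ‖A a b‖ = ‖riemannSum A (2 ^ n) a b‖ := by rw [hsum]
    _ ≤ ((2 ^ n : ℕ) : ℝ) * (c * (|b - a| / (2 ^ n : ℕ)) ^ w) := by
      refine norm_sum_range_le_mul fun i hi => ?_
      have h := hbd _ _ (partitionPt_mem ha hb hi.le) (partitionPt_mem ha hb hi)
      rwa [abs_partitionPt_succ_sub] at h
    _ = c * |b - a| ^ w * ((2 : ℝ) ^ (1 - w)) ^ n := by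
      rw [Nat.cast_pow, Nat.cast_ofNat, mul_left_comm,
        two_pow_mul_div_two_pow_rpow (abs_nonneg _), mul_assoc]
  exact norm_le_zero_iff.1 (ge_of_tendsto' (tendsto_mul_two_rpow_one_sub_pow hw _) hle)

end Estimates

def sew (φ : ℝ → ℝ → V) (a b : ℝ) : V := limUnder atTop fun n => riemannSum φ (2 ^ n) a b

/-- The sewing map `Λ` of the paper applied to `δφ`. -/
def sewRemainder (φ : ℝ → ℝ → V) (a b : ℝ) : V := φ a b - sew φ a b

section Sew

variable {T z κ : ℝ} {φ : ℝ → ℝ → V} {a b : ℝ}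

lemma sew_eq_of_tendsto {L : V}
    (h : Tendsto (fun n => riemannSum φ (2 ^ n) a b) atTop (𝓝 L)) : sew φ a b = L :=
  h.limUnder_eq

lemma sew_self (hφ : φ a a = 0) : sew φ a a = 0 := by
  have h (k : ℕ) : riemannSum φ k a a = 0 := by simp [riemannSum, partitionPt, hφ]
  exact sew_eq_of_tendsto (by simpa only [h] using tendsto_const_nhds)

lemma sew_eq_zero (hφ : ∀ x ∈ Icc 0 T, ∀ y ∈ Icc 0 T, φ x y = 0) (ha : a ∈ Icc 0 T)
    (hb : b ∈ Icc 0 T) : sew φ a b = 0 := by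
  have h (k : ℕ) : riemannSum φ k a b = 0 := Finset.sum_eq_zero fun i hi =>
    hφ _ (partitionPt_mem ha hb (Finset.mem_range.1 hi).le) _
      (partitionPt_mem ha hb (Finset.mem_range.1 hi))
  exact sew_eq_of_tendsto (by simpa only [h] using tendsto_const_nhds)

lemma continuousOn_riemannSum_param {P : Type*} [TopologicalSpace P] {S : Set P}
    {φ : P → ℝ → ℝ → V}
    (hc : ContinuousOn (fun q : P × ℝ × ℝ => φ q.1 q.2.1 q.2.2) (S ×ˢ Icc 0 T ×ˢ Icc 0 T))
    (k : ℕ) :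
    ContinuousOn (fun q : P × ℝ × ℝ => riemannSum (φ q.1) k q.2.1 q.2.2)
      (S ×ˢ Icc 0 T ×ˢ Icc 0 T) := by
  refine continuousOn_finsetSum _ fun i hi => hc.comp (by unfold partitionPt; fun_prop :
    Continuous fun q : P × ℝ × ℝ =>
      (q.1, partitionPt q.2.1 q.2.2 k i, partitionPt q.2.1 q.2.2 k (i + 1))).continuousOn
    fun q hq => ⟨hq.1, partitionPt_mem hq.2.1 hq.2.2 (Finset.mem_range.1 hi).le,
      partitionPt_mem hq.2.1 hq.2.2 (Finset.mem_range.1 hi)⟩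

variable [CompleteSpace V]

lemma tendsto_riemannSum_sew (hz : 1 < z) (hφ : CoboundBound T z κ φ) (ha : a ∈ Icc 0 T)
    (hb : b ∈ Icc 0 T) :
    Tendsto (fun n => riemannSum φ (2 ^ n) a b) atTop (𝓝 (sew φ a b)) :=
  (cauchySeq_of_le_geometric _ _ (two_rpow_one_sub_lt_one hz)
    (dist_riemannSum_two_pow_succ_le hφ ha hb)).tendsto_limUnder

lemma norm_riemannSum_sub_sew_le (hz : 1 < z) (hφ : CoboundBound T z κ φ) (ha : a ∈ Icc 0 T)
    (hb : b ∈ Icc 0 T) (n : ℕ) :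
    ‖riemannSum φ (2 ^ n) a b - sew φ a b‖
      ≤ ((2 : ℝ) ^ z - 2)⁻¹ * κ * |b - a| ^ z * ((2 : ℝ) ^ (1 - z)) ^ n := by
  have h := dist_le_of_le_geometric_of_tendsto _ _ (two_rpow_one_sub_lt_one hz)
    (dist_riemannSum_two_pow_succ_le hφ ha hb) (tendsto_riemannSum_sew hz hφ ha hb) n
  rw [dist_eq_norm] at h
  refine h.trans_eq ?_
  have h2z : (2 : ℝ) ^ z - 2 ≠ 0 := sub_ne_zero.2 (two_lt_two_rpow hz).ne'
  rw [Real.div_rpow (abs_nonneg _) zero_le_two, Real.rpow_sub two_pos, Real.rpow_one]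
  field_simp

lemma norm_sewRemainder_le (hz : 1 < z) (hφ : CoboundBound T z κ φ) (ha : a ∈ Icc 0 T)
    (hb : b ∈ Icc 0 T) : ‖sewRemainder φ a b‖ ≤ ((2 : ℝ) ^ z - 2)⁻¹ * κ * |b - a| ^ z := by
  simpa [riemannSum_one, sewRemainder] using norm_riemannSum_sub_sew_le hz hφ ha hb 0

lemma tendsto_riemannSum_mul_sew (hz : 1 < z) (hφ : CoboundBound T z κ φ)
    (hdiag : ∀ x ∈ Icc 0 T, φ x x = 0) (ha : a ∈ Icc 0 T) (hb : b ∈ Icc 0 T) {q : ℕ}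
    (hq : q ≠ 0) : Tendsto (fun n => riemannSum φ (2 ^ n * q) a b) atTop (𝓝 (sew φ a b)) := by
  have hdiff : Tendsto (fun n => riemannSum φ (2 ^ n * q) a b - riemannSum φ (2 ^ n) a b)
      atTop (𝓝 0) := by
    refine squeeze_zero_norm (fun n => ?_)
      (tendsto_mul_two_rpow_one_sub_pow hz (q * κ * |b - a| ^ z))
    calc _ ≤ ((2 ^ n : ℕ) : ℝ) * (q * (κ * (|b - a| / (2 ^ n : ℕ)) ^ z)) :=
          norm_riemannSum_mul_sub_le hq ha hb fun x hx y hy hxy => by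
            rw [← hxy]; exact norm_riemannSum_sub_le hφ (hdiag x hx) hx hy hq
      _ = _ := by
          have h := two_pow_mul_div_two_pow_rpow (abs_nonneg (b - a)) z n
          push_cast
          linear_combination (q * κ) * h
  simpa using (tendsto_riemannSum_sew hz hφ ha hb).add hdiff

lemma sew_swap (hz : 1 < z) (hφ : CoboundBound T z κ φ) (hdiag : ∀ x ∈ Icc 0 T, φ x x = 0)
    (ha : a ∈ Icc 0 T) (hb : b ∈ Icc 0 T) : sew φ b a = -sew φ a b := by
  have h : Tendsto (fun n => riemannSum φ (2 ^ n) b a + riemannSum φ (2 ^ n) a b) atTop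
      (𝓝 0) := by
    refine squeeze_zero_norm (fun n => ?_) (tendsto_mul_two_rpow_one_sub_pow hz (κ * |b - a| ^ z))
    calc _ ≤ ((2 ^ n : ℕ) : ℝ) * (κ * (|b - a| / (2 ^ n : ℕ)) ^ z) := by
          rw [riemannSum_swap φ a b (pow_ne_zero n two_ne_zero), riemannSum,
            ← Finset.sum_add_distrib]
          refine norm_sum_range_le_mul fun i hi => ?_
          have hx := partitionPt_mem ha hb hi.le
          have hgap := abs_partitionPt_succ_sub a b (2 ^ n) i
          convert hφ hx (partitionPt_mem ha hb hi) hx hgap.le (by rw [abs_sub_comm, hgap])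
            using 2
          rw [cobound, hdiag _ hx, sub_zero]
      _ = _ := by
          have h := two_pow_mul_div_two_pow_rpow (abs_nonneg (b - a)) z n
          push_cast
          linear_combination κ * h
  exact eq_neg_of_add_eq_zero_left (tendsto_nhds_unique
    ((tendsto_riemannSum_sew hz hφ hb ha).add (tendsto_riemannSum_sew hz hφ ha hb)) h)

lemma sew_eq_add_partitionPt (hz : 1 < z) (hφ : CoboundBound T z κ φ)
    (hdiag : ∀ x ∈ Icc 0 T, φ x x = 0) (ha : a ∈ Icc 0 T) (hb : b ∈ Icc 0 T) {p s : ℕ}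
    (hps : p + s ≠ 0) :
    sew φ a b = sew φ a (partitionPt a b (p + s) p) + sew φ (partitionPt a b (p + s) p) b := by
  rcases Nat.eq_zero_or_pos p with rfl | hp
  · rw [zero_add, partitionPt_zero, sew_self (hdiag a ha), zero_add]
  rcases Nat.eq_zero_or_pos s with rfl | hs
  · rw [add_zero, partitionPt_self a b hp.ne', sew_self (hdiag b hb), add_zero]
  set u := partitionPt a b (p + s) p
  have hu : u ∈ Icc 0 T := partitionPt_mem ha hb (Nat.le_add_right p s)
  have hsplit (n : ℕ) : riemannSum φ (2 ^ n * (p + s)) a b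
      = riemannSum φ (2 ^ n * p) a u + riemannSum φ (2 ^ n * s) u b := by
    have h2n : 2 ^ n ≠ 0 := pow_ne_zero n two_ne_zero
    rw [mul_add, riemannSum_add φ a b (mul_ne_zero h2n hp.ne') (mul_ne_zero h2n hs.ne'),
      ← mul_add, partitionPt_mul_mul a b h2n]
  refine tendsto_nhds_unique (tendsto_riemannSum_mul_sew hz hφ hdiag ha hb hps) ?_
  simpa only [hsplit] using (tendsto_riemannSum_mul_sew hz hφ hdiag ha hu hp.ne').add
    (tendsto_riemannSum_mul_sew hz hφ hdiag hu hb hs.ne')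

/-- The dyadic Riemann sums converge to `sew` uniformly in the parameter and the endpoints. -/
lemma continuousOn_sew_param {P : Type*} [TopologicalSpace P] {S : Set P}
    {φ : P → ℝ → ℝ → V} (hz : 1 < z) (hκ : 0 ≤ κ) (hφ : ∀ p ∈ S, CoboundBound T z κ (φ p))
    (hc : ContinuousOn (fun q : P × ℝ × ℝ => φ q.1 q.2.1 q.2.2) (S ×ˢ Icc 0 T ×ˢ Icc 0 T)) :
    ContinuousOn (fun q : P × ℝ × ℝ => sew (φ q.1) q.2.1 q.2.2) (S ×ˢ Icc 0 T ×ˢ Icc 0 T) := by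
  refine TendstoUniformlyOn.continuousOn (p := atTop)
    (F := fun n q => riemannSum (φ q.1) (2 ^ n) q.2.1 q.2.2) ?_
    (Frequently.of_forall fun n => continuousOn_riemannSum_param hc _)
  rw [Metric.tendstoUniformlyOn_iff]
  intro ε hε
  filter_upwards [(tendsto_mul_two_rpow_one_sub_pow hz
    (((2 : ℝ) ^ z - 2)⁻¹ * κ * T ^ z)).eventually (gt_mem_nhds hε)] with n hn q hq
  rw [dist_comm, dist_eq_norm]
  refine ((norm_riemannSum_sub_sew_le hz (hφ q.1 hq.1) hq.2.1 hq.2.2 n).trans ?_).trans_lt hn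
  have := inv_two_rpow_sub_two_nonneg hz
  gcongr
  exact abs_sub_le_of_mem_Icc hq.2.1 hq.2.2

lemma continuousOn_sew (hz : 1 < z) (hκ : 0 ≤ κ) (hφ : CoboundBound T z κ φ)
    (hc : ContinuousOn (fun q : ℝ × ℝ => φ q.1 q.2) (Icc 0 T ×ˢ Icc 0 T)) :
    ContinuousOn (fun q : ℝ × ℝ => sew φ q.1 q.2) (Icc 0 T ×ˢ Icc 0 T) := by
  have hc' : ContinuousOn (fun q : Unit × ℝ × ℝ => φ q.2.1 q.2.2) (univ ×ˢ Icc 0 T ×ˢ Icc 0 T) :=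
    hc.comp continuous_snd.continuousOn fun _ hq => hq.2
  have h := continuousOn_sew_param (S := univ) (φ := fun _ => φ) hz hκ (fun _ _ => hφ) hc'
  have hf : Continuous fun q : ℝ × ℝ => ((), q) := by fun_prop
  have hmap : MapsTo (fun q : ℝ × ℝ => ((), q)) (Icc 0 T ×ˢ Icc 0 T)
      (univ ×ˢ Icc 0 T ×ˢ Icc 0 T) := fun _ hq => ⟨mem_univ _, hq⟩
  have h' := h.comp hf.continuousOn hmap
  exact h'

/-- Additivity at the points `a + t (b - a)` with rational `t` extends to all `t ∈ [0, 1]` by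
continuity. -/
lemma sew_eq_add_of_mem_uIcc (hz : 1 < z) (hκ : 0 ≤ κ) (hφ : CoboundBound T z κ φ)
    (hdiag : ∀ x ∈ Icc 0 T, φ x x = 0)
    (hc : ContinuousOn (fun q : ℝ × ℝ => φ q.1 q.2) (Icc 0 T ×ˢ Icc 0 T))
    (ha : a ∈ Icc 0 T) (hb : b ∈ Icc 0 T) {u : ℝ} (hu : u ∈ uIcc a b) :
    sew φ a b = sew φ a u + sew φ u b := by
  have hsub := uIcc_subset_Icc ha hb
  have hF : ContinuousOn (fun x => sew φ a x + sew φ x b) (uIcc a b) := by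
    have h := continuousOn_sew hz hκ hφ hc
    have hl : Continuous fun x : ℝ => (a, x) := by fun_prop
    have hr : Continuous fun x : ℝ => (x, b) := by fun_prop
    have hl' := h.comp hl.continuousOn fun x hx => ⟨ha, hsub hx⟩
    have hr' := h.comp hr.continuousOn fun x hx => ⟨hsub hx, hb⟩
    exact hl'.add hr'
  obtain ⟨t, ⟨ht₀, ht₁⟩, rfl⟩ : ∃ t ∈ Icc (0 : ℝ) 1, a + t • (b - a) = u := by
    rwa [← segment_eq_uIcc, segment_eq_image'] at hu
  rw [smul_eq_mul] at hu ⊢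
  have hfloor (n : ℕ) : ⌊t * n⌋₊ ≤ n :=
    Nat.floor_le_of_le (mul_le_of_le_one_left n.cast_nonneg ht₁)
  have hlim : Tendsto (fun n : ℕ => partitionPt a b n ⌊t * n⌋₊) atTop
      (𝓝[uIcc a b] (a + t * (b - a))) := by
    refine tendsto_nhdsWithin_iff.2 ⟨?_, Eventually.of_forall fun n =>
      partitionPt_mem_uIcc a b (hfloor n)⟩
    convert (((tendsto_nat_floor_mul_div_atTop ht₀).comp tendsto_natCast_atTop_atTop).mul_const
      (b - a)).const_add a using 2 with n
    simp [partitionPt, mul_div_right_comm]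
  refine tendsto_nhds_unique (tendsto_const_nhds.congr' ?_) ((hF _ hu).tendsto.comp hlim)
  filter_upwards [eventually_ne_atTop 0] with n hn
  have h := sew_eq_add_partitionPt hz hφ hdiag ha hb (p := ⌊t * n⌋₊) (s := n - ⌊t * n⌋₊)
    (by omega)
  rwa [Nat.add_sub_cancel' (hfloor n)] at h

lemma cobound_sew_eq_zero (hz : 1 < z) (hκ : 0 ≤ κ) (hφ : CoboundBound T z κ φ)
    (hdiag : ∀ x ∈ Icc 0 T, φ x x = 0)
    (hc : ContinuousOn (fun q : ℝ × ℝ => φ q.1 q.2) (Icc 0 T ×ˢ Icc 0 T))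
    {x u y : ℝ} (hx : x ∈ Icc 0 T) (hu : u ∈ Icc 0 T) (hy : y ∈ Icc 0 T) :
    cobound (sew φ) x u y = 0 := by
  have split := fun {a b c} (ha : a ∈ Icc 0 T) (hc' : c ∈ Icc 0 T) (hb : b ∈ uIcc a c) =>
    sew_eq_add_of_mem_uIcc hz hκ hφ hdiag hc ha hc' hb
  have swap := fun {a b} (ha : a ∈ Icc 0 T) (hb : b ∈ Icc 0 T) => sew_swap hz hφ hdiag ha hb
  rcases mem_uIcc_or_mem_uIcc_or_mem_uIcc x u y with h | h | h
  · rw [cobound, split hx hy h]; abel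
  · rw [cobound, split hu hy h, swap hx hu]; abel
  · rw [cobound, split hx hu h, swap hu hy]; abel

lemma cobound_sewRemainder (hz : 1 < z) (hκ : 0 ≤ κ) (hφ : CoboundBound T z κ φ)
    (hdiag : ∀ x ∈ Icc 0 T, φ x x = 0)
    (hc : ContinuousOn (fun q : ℝ × ℝ => φ q.1 q.2) (Icc 0 T ×ˢ Icc 0 T))
    {x u y : ℝ} (hx : x ∈ Icc 0 T) (hu : u ∈ Icc 0 T) (hy : y ∈ Icc 0 T) :
    cobound (sewRemainder φ) x u y = cobound φ x u y := by
  have h := cobound_sew_eq_zero hz hκ hφ hdiag hc hx hu hy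
  calc cobound (sewRemainder φ) x u y = cobound φ x u y - cobound (sew φ) x u y := by
        simp only [cobound, sewRemainder]; abel
    _ = cobound φ x u y := by rw [h, sub_zero]

lemma continuousOn_sewRemainder_param {P : Type*} [TopologicalSpace P] {S : Set P}
    {φ : P → ℝ → ℝ → V} (hz : 1 < z) (hκ : 0 ≤ κ) (hφ : ∀ p ∈ S, CoboundBound T z κ (φ p))
    (hc : ContinuousOn (fun q : P × ℝ × ℝ => φ q.1 q.2.1 q.2.2) (S ×ˢ Icc 0 T ×ˢ Icc 0 T)) :
    ContinuousOn (fun q : P × ℝ × ℝ => sewRemainder (φ q.1) q.2.1 q.2.2)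
      (S ×ˢ Icc 0 T ×ˢ Icc 0 T) :=
  hc.sub (continuousOn_sew_param hz hκ hφ hc)

end Sew

section Uniqueness

variable {T : ℝ}

/-- `‖r‖_{w₁,w₂} < ∞` on `[0, T]`. -/
def FiniteRectNorm (T w₁ w₂ : ℝ) (r : ℝ → ℝ → ℝ → ℝ → V) : Prop :=
  ∃ K : ℝ, ∀ s₁ s₂ t₁ t₂ : ℝ, s₁ ∈ Icc 0 T → s₂ ∈ Icc 0 T → t₁ ∈ Icc 0 T → t₂ ∈ Icc 0 T →
    ‖r s₁ s₂ t₁ t₂‖ ≤ K * |s₂ - s₁| ^ w₁ * |t₂ - t₁| ^ w₂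

lemma delFull_sub (r r' : ℝ → ℝ → ℝ → ℝ → V) (s₁ u s₂ t₁ v t₂ : ℝ) :
    delFull (r - r') s₁ u s₂ t₁ v t₂ = delFull r s₁ u s₂ t₁ v t₂ - delFull r' s₁ u s₂ t₁ v t₂ := by
  simp only [delFull, del1, Pi.sub_apply]
  abel

lemma FiniteRectNorm.eq_zero {w₁ w₂ : ℝ} {r : ℝ → ℝ → ℝ → ℝ → V}
    (hr : FiniteRectNorm T w₁ w₂ r) (hw₁ : 0 < w₁) (hw₂ : 0 < w₂) {s₁ s₂ t₁ t₂ : ℝ}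
    (hs₁ : s₁ ∈ Icc 0 T) (hs₂ : s₂ ∈ Icc 0 T) (ht₁ : t₁ ∈ Icc 0 T) (ht₂ : t₂ ∈ Icc 0 T)
    (h : s₁ = s₂ ∨ t₁ = t₂) : r s₁ s₂ t₁ t₂ = 0 := by
  obtain ⟨K, hK⟩ := hr
  refine norm_le_zero_iff.1 ((hK _ _ _ _ hs₁ hs₂ ht₁ ht₂).trans_eq ?_)
  rcases h with rfl | rfl <;> simp [Real.zero_rpow hw₁.ne', Real.zero_rpow hw₂.ne']

lemma FiniteRectNorm.sub {w₁ w₂ : ℝ} {r r' : ℝ → ℝ → ℝ → ℝ → V}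
    (hr : FiniteRectNorm T w₁ w₂ r) (hr' : FiniteRectNorm T w₁ w₂ r') :
    FiniteRectNorm T w₁ w₂ (r - r') := by
  obtain ⟨K, hK⟩ := hr
  obtain ⟨K', hK'⟩ := hr'
  refine ⟨K + K', fun s₁ s₂ t₁ t₂ hs₁ hs₂ ht₁ ht₂ => ?_⟩
  calc ‖r s₁ s₂ t₁ t₂ - r' s₁ s₂ t₁ t₂‖ ≤ ‖r s₁ s₂ t₁ t₂‖ + ‖r' s₁ s₂ t₁ t₂‖ := norm_sub_le _ _
    _ ≤ _ := (add_le_add (hK _ _ _ _ hs₁ hs₂ ht₁ ht₂) (hK' _ _ _ _ hs₁ hs₂ ht₁ ht₂)).trans_eq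
      (by ring)

lemma FiniteRectNorm.mono {w₁ w₂ v₁ v₂ : ℝ} {r : ℝ → ℝ → ℝ → ℝ → V}
    (hr : FiniteRectNorm T w₁ w₂ r) (hv₁ : 0 < v₁) (hvw₁ : v₁ ≤ w₁) (hv₂ : 0 < v₂)
    (hvw₂ : v₂ ≤ w₂) : FiniteRectNorm T v₁ v₂ r := by
  obtain ⟨K, hK⟩ := hr
  refine ⟨|K| * T ^ (w₁ - v₁) * T ^ (w₂ - v₂), fun s₁ s₂ t₁ t₂ hs₁ hs₂ ht₁ ht₂ => ?_⟩
  have hT : 0 ≤ T := hs₁.1.trans hs₁.2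
  have hs := rpow_le_mul_rpow_of_le (abs_nonneg _) (abs_sub_le_of_mem_Icc hs₁ hs₂) hv₁ hvw₁
  have ht := rpow_le_mul_rpow_of_le (abs_nonneg _) (abs_sub_le_of_mem_Icc ht₁ ht₂) hv₂ hvw₂
  calc ‖r s₁ s₂ t₁ t₂‖ ≤ |K| * |s₂ - s₁| ^ w₁ * |t₂ - t₁| ^ w₂ :=
        (hK _ _ _ _ hs₁ hs₂ ht₁ ht₂).trans (by gcongr; exact le_abs_self K)
    _ ≤ |K| * (T ^ (w₁ - v₁) * |s₂ - s₁| ^ v₁) * (T ^ (w₂ - v₂) * |t₂ - t₁| ^ v₂) := by gcongr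
    _ = _ := by ring

/-- `δ₂δ₁r = 0` makes `δ₁r` additive in `t`, hence zero by its size; then `r` is additive in
`s`, hence zero. -/
lemma eq_zero_of_delFull_eq_zero {w₁ w₂ : ℝ} {r : ℝ → ℝ → ℝ → ℝ → V} (hw₁ : 1 < w₁)
    (hw₂ : 1 < w₂) (hr : FiniteRectNorm T w₁ w₂ r)
    (hδ : ∀ s₁ u s₂ t₁ v t₂ : ℝ, s₁ ∈ Icc 0 T → u ∈ Icc 0 T → s₂ ∈ Icc 0 T →
      t₁ ∈ Icc 0 T → v ∈ Icc 0 T → t₂ ∈ Icc 0 T → delFull r s₁ u s₂ t₁ v t₂ = 0)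
    {s₁ s₂ t₁ t₂ : ℝ} (hs₁ : s₁ ∈ Icc 0 T) (hs₂ : s₂ ∈ Icc 0 T) (ht₁ : t₁ ∈ Icc 0 T)
    (ht₂ : t₂ ∈ Icc 0 T) : r s₁ s₂ t₁ t₂ = 0 := by
  obtain ⟨K, hK⟩ := hr
  have hK' {a b x y : ℝ} (ha : a ∈ Icc 0 T) (hb : b ∈ Icc 0 T) (hx : x ∈ Icc 0 T)
      (hy : y ∈ Icc 0 T) :
      ‖r a b x y‖ ≤ |K| * T ^ w₁ * |y - x| ^ w₂ ∧ ‖r a b x y‖ ≤ |K| * T ^ w₂ * |b - a| ^ w₁ := by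
    have hab := Real.rpow_le_rpow (abs_nonneg _) (abs_sub_le_of_mem_Icc ha hb)
      (by linarith : 0 ≤ w₁)
    have hxy := Real.rpow_le_rpow (abs_nonneg _) (abs_sub_le_of_mem_Icc hx hy)
      (by linarith : 0 ≤ w₂)
    have h : ‖r a b x y‖ ≤ |K| * |b - a| ^ w₁ * |y - x| ^ w₂ :=
      (hK a b x y ha hb hx hy).trans (by gcongr; exact le_abs_self K)
    refine ⟨h.trans (by gcongr), h.trans ?_⟩
    calc _ ≤ |K| * |b - a| ^ w₁ * T ^ w₂ := by gcongr
      _ = _ := by ring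
  have hδ₁ {a u b x y : ℝ} (ha : a ∈ Icc 0 T) (hu : u ∈ Icc 0 T) (hb : b ∈ Icc 0 T)
      (hx : x ∈ Icc 0 T) (hy : y ∈ Icc 0 T) : del1 r a u b x y = 0 := by
    refine eq_zero_of_cobound_eq_zero (A := del1 r a u b) (c := 3 * (|K| * T ^ w₁)) hw₂
      (fun x v y hx hv hy => hδ a u b x v y ha hu hb hx hv hy) (fun x y hx hy => ?_) hx hy
    have h₁ := (hK' hu hb hx hy).1
    have h₂ := (hK' ha hb hx hy).1
    have h₃ := (hK' ha hu hx hy).1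
    have h : ‖r u b x y - r a b x y + r a u x y‖ ≤ ‖r u b x y‖ + ‖r a b x y‖ + ‖r a u x y‖ :=
      (norm_add_le _ _).trans (add_le_add (norm_sub_le _ _) le_rfl)
    rw [del1]
    linarith
  exact eq_zero_of_cobound_eq_zero (A := fun x y => r x y t₁ t₂) (c := |K| * T ^ w₂) hw₁
    (fun x u y hx hu hy => hδ₁ hx hu hy ht₁ ht₂) (fun x y hx hy => (hK' hx hy ht₁ ht₂).2) hs₁ hs₂

end Uniqueness

def MixedBound (T z₁ z₂ κ : ℝ) (h : ℝ → ℝ → ℝ → ℝ → ℝ → ℝ → V) : Prop :=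
  ∀ ⦃s₁ u s₂ t₁ v t₂ D₁ D₂ : ℝ⦄, s₁ ∈ Icc 0 T → u ∈ Icc 0 T → s₂ ∈ Icc 0 T → t₁ ∈ Icc 0 T →
    v ∈ Icc 0 T → t₂ ∈ Icc 0 T → |u - s₁| ≤ D₁ → |s₂ - u| ≤ D₁ → |v - t₁| ≤ D₂ →
    |t₂ - v| ≤ D₂ → ‖h s₁ u s₂ t₁ v t₂‖ ≤ κ * D₁ ^ z₁ * D₂ ^ z₂

lemma MixedBound.congr {T z₁ z₂ κ : ℝ} {h h' : ℝ → ℝ → ℝ → ℝ → ℝ → ℝ → V}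
    (hh : MixedBound T z₁ z₂ κ h)
    (heq : ∀ s₁ u s₂ t₁ v t₂ : ℝ, s₁ ∈ Icc 0 T → u ∈ Icc 0 T → s₂ ∈ Icc 0 T →
      t₁ ∈ Icc 0 T → v ∈ Icc 0 T → t₂ ∈ Icc 0 T → h s₁ u s₂ t₁ v t₂ = h' s₁ u s₂ t₁ v t₂) :
    MixedBound T z₁ z₂ κ h' := fun s₁ u s₂ t₁ v t₂ _ _ hs₁ hu hs₂ ht₁ hv ht₂ =>
  heq s₁ u s₂ t₁ v t₂ hs₁ hu hs₂ ht₁ hv ht₂ ▸ hh hs₁ hu hs₂ ht₁ hv ht₂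

lemma mixedBound_of_eq_sum {T z₁ z₂ : ℝ} {h : ℝ → ℝ → ℝ → ℝ → ℝ → ℝ → V} {N : ℕ}
    {hd : Fin N → ℝ → ℝ → ℝ → ℝ → ℝ → ℝ → V} {C γ₁ γ₂ : Fin N → ℝ} (hC : ∀ k, 0 ≤ C k)
    (hγ₁ : ∀ k, γ₁ k ∈ Ioo 0 z₁) (hγ₂ : ∀ k, γ₂ k ∈ Ioo 0 z₂)
    (hsum : ∀ s₁ u s₂ t₁ v t₂ : ℝ, s₁ ∈ Icc 0 T → u ∈ Icc 0 T → s₂ ∈ Icc 0 T →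
      t₁ ∈ Icc 0 T → v ∈ Icc 0 T → t₂ ∈ Icc 0 T → h s₁ u s₂ t₁ v t₂ = ∑ k, hd k s₁ u s₂ t₁ v t₂)
    (hbd : ∀ k, ∀ s₁ u s₂ t₁ v t₂ : ℝ, s₁ ∈ Icc 0 T → u ∈ Icc 0 T → s₂ ∈ Icc 0 T →
      t₁ ∈ Icc 0 T → v ∈ Icc 0 T → t₂ ∈ Icc 0 T →
      ‖hd k s₁ u s₂ t₁ v t₂‖ ≤ C k * |u - s₁| ^ (γ₁ k) * |s₂ - u| ^ (z₁ - γ₁ k)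
        * |v - t₁| ^ (γ₂ k) * |t₂ - v| ^ (z₂ - γ₂ k)) :
    MixedBound T z₁ z₂ (∑ k, C k) h := by
  intro s₁ u s₂ t₁ v t₂ D₁ D₂ hs₁ hu hs₂ ht₁ hv ht₂ h₁ h₁' h₂ h₂'
  rw [hsum s₁ u s₂ t₁ v t₂ hs₁ hu hs₂ ht₁ hv ht₂, Finset.sum_mul, Finset.sum_mul]
  refine norm_sum_le_of_le _ fun k _ => (hbd k s₁ u s₂ t₁ v t₂ hs₁ hu hs₂ ht₁ hv ht₂).trans ?_
  have e₁ := rpow_mul_rpow_le (abs_nonneg _) (abs_nonneg _) h₁ h₁' (hγ₁ k).1.le (hγ₁ k).2.le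
    ((hγ₁ k).1.trans (hγ₁ k).2)
  have e₂ := rpow_mul_rpow_le (abs_nonneg _) (abs_nonneg _) h₂ h₂' (hγ₂ k).1.le (hγ₂ k).2.le
    ((hγ₂ k).1.trans (hγ₂ k).2)
  calc _ = C k * (|u - s₁| ^ γ₁ k * |s₂ - u| ^ (z₁ - γ₁ k))
        * (|v - t₁| ^ γ₂ k * |t₂ - v| ^ (z₂ - γ₂ k)) := by ring
    _ ≤ C k * D₁ ^ z₁ * D₂ ^ z₂ := by
      have := hC k
      have := (abs_nonneg _).trans h₁
      gcongr

/-- `g ∈ 𝒞𝒞_{2,2}(V)` on `[0, T]`, with a mixed bound on `δg`. -/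
structure Sewable₂ (T z₁ z₂ κ : ℝ) (g : ℝ → ℝ → ℝ → ℝ → V) : Prop where
  continuousOn : ContinuousOn (fun q : (ℝ × ℝ) × ℝ × ℝ => g q.1.1 q.1.2 q.2.1 q.2.2)
    ((Icc 0 T ×ˢ Icc 0 T) ×ˢ (Icc 0 T ×ˢ Icc 0 T))
  eq_zero : ∀ s₁ s₂ t₁ t₂ : ℝ, s₁ ∈ Icc 0 T → s₂ ∈ Icc 0 T → t₁ ∈ Icc 0 T → t₂ ∈ Icc 0 T →
    (s₁ = s₂ ∨ t₁ = t₂) → g s₁ s₂ t₁ t₂ = 0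
  mixedBound : MixedBound T z₁ z₂ κ (delFull g)

def sewSnd (g : ℝ → ℝ → ℝ → ℝ → V) (s₁ u s₂ t₁ t₂ : ℝ) : V :=
  sewRemainder (del1 g s₁ u s₂) t₁ t₂

/-- The two-dimensional sewing map applied to `δg`. `sewSnd g` sews `δ₁g` in the `t`-variables;
being `δ₁`-closed, it is `δ₁` of its restriction to the base point `s₁ = 0`, which is then sewn
in the `s`-variables. -/
def sew₂ (g : ℝ → ℝ → ℝ → ℝ → V) (s₁ s₂ t₁ t₂ : ℝ) : V :=
  sewRemainder (fun x y => sewSnd g 0 x y t₁ t₂) s₁ s₂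

namespace Sewable₂

variable {T z₁ z₂ κ : ℝ} {g : ℝ → ℝ → ℝ → ℝ → V}

lemma del1_self (hg : Sewable₂ T z₁ z₂ κ g) {s₁ u s₂ x : ℝ} (hs₁ : s₁ ∈ Icc 0 T)
    (hu : u ∈ Icc 0 T) (hs₂ : s₂ ∈ Icc 0 T) (hx : x ∈ Icc 0 T) : del1 g s₁ u s₂ x x = 0 := by
  rw [del1, hg.eq_zero _ _ _ _ hu hs₂ hx hx (.inr rfl), hg.eq_zero _ _ _ _ hs₁ hs₂ hx hx (.inr rfl),
    hg.eq_zero _ _ _ _ hs₁ hu hx hx (.inr rfl), sub_self, zero_add]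

lemma continuousOn_slice (hg : Sewable₂ T z₁ z₂ κ g) {x y : ℝ} (hx : x ∈ Icc 0 T)
    (hy : y ∈ Icc 0 T) :
    ContinuousOn (fun q : ℝ × ℝ => g x y q.1 q.2) (Icc 0 T ×ˢ Icc 0 T) := by
  have hf : Continuous fun q : ℝ × ℝ => ((x, y), q) := by fun_prop
  have h := hg.continuousOn.comp (s := Icc 0 T ×ˢ Icc 0 T) hf.continuousOn
    fun q hq => ⟨⟨hx, hy⟩, hq⟩
  exact h

lemma continuousOn_del1 (hg : Sewable₂ T z₁ z₂ κ g) {s₁ u s₂ : ℝ} (hs₁ : s₁ ∈ Icc 0 T)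
    (hu : u ∈ Icc 0 T) (hs₂ : s₂ ∈ Icc 0 T) :
    ContinuousOn (fun q : ℝ × ℝ => del1 g s₁ u s₂ q.1 q.2) (Icc 0 T ×ˢ Icc 0 T) :=
  ((hg.continuousOn_slice hu hs₂).sub (hg.continuousOn_slice hs₁ hs₂)).add
    (hg.continuousOn_slice hs₁ hu)

lemma continuousOn_del1_zero (hg : Sewable₂ T z₁ z₂ κ g) (hT : 0 ≤ T) :
    ContinuousOn (fun q : (ℝ × ℝ) × ℝ × ℝ => del1 g 0 q.1.1 q.1.2 q.2.1 q.2.2)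
      ((Icc 0 T ×ˢ Icc 0 T) ×ˢ (Icc 0 T ×ˢ Icc 0 T)) := by
  have h₀ : (0 : ℝ) ∈ Icc 0 T := ⟨le_rfl, hT⟩
  have hf₁ : Continuous fun q : (ℝ × ℝ) × ℝ × ℝ => (((0 : ℝ), q.1.2), q.2) := by fun_prop
  have hf₂ : Continuous fun q : (ℝ × ℝ) × ℝ × ℝ => (((0 : ℝ), q.1.1), q.2) := by fun_prop
  have h₁ := hg.continuousOn.comp (s := (Icc 0 T ×ˢ Icc 0 T) ×ˢ (Icc 0 T ×ˢ Icc 0 T))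
    hf₁.continuousOn fun q hq => ⟨⟨h₀, hq.1.2⟩, hq.2⟩
  have h₂ := hg.continuousOn.comp (s := (Icc 0 T ×ˢ Icc 0 T) ×ˢ (Icc 0 T ×ˢ Icc 0 T))
    hf₂.continuousOn fun q hq => ⟨⟨h₀, hq.1.1⟩, hq.2⟩
  have h := (hg.continuousOn.sub h₁).add h₂
  exact h

lemma coboundBound_del1 (hg : Sewable₂ T z₁ z₂ κ g) {s₁ u s₂ : ℝ} (hs₁ : s₁ ∈ Icc 0 T)
    (hu : u ∈ Icc 0 T) (hs₂ : s₂ ∈ Icc 0 T) :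
    CoboundBound T z₂ (κ * max |u - s₁| |s₂ - u| ^ z₁) (del1 g s₁ u s₂) :=
  fun _ _ _ _ ht₁ hv ht₂ h₂ h₂' =>
    hg.mixedBound hs₁ hu hs₂ ht₁ hv ht₂ (le_max_left _ _) (le_max_right _ _) h₂ h₂'

lemma sewSnd_zero_self (hg : Sewable₂ T z₁ z₂ κ g) {x t₁ t₂ : ℝ} (hx : x ∈ Icc 0 T)
    (ht₁ : t₁ ∈ Icc 0 T) (ht₂ : t₂ ∈ Icc 0 T) : sewSnd g 0 x x t₁ t₂ = 0 := by
  have h : ∀ a ∈ Icc 0 T, ∀ b ∈ Icc 0 T, del1 g 0 x x a b = 0 := fun a ha b hb => by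
    rw [del1, hg.eq_zero _ _ _ _ hx hx ha hb (.inl rfl), zero_sub, neg_add_cancel]
  rw [sewSnd, sewRemainder, h _ ht₁ _ ht₂, sew_eq_zero h ht₁ ht₂, sub_zero]

variable [CompleteSpace V]

lemma continuousOn_sewSnd_zero (hg : Sewable₂ T z₁ z₂ κ g) (hT : 0 ≤ T) (hz₁ : 0 ≤ z₁)
    (hz₂ : 1 < z₂) (hκ : 0 ≤ κ) :
    ContinuousOn (fun q : (ℝ × ℝ) × ℝ × ℝ => sewSnd g 0 q.1.1 q.1.2 q.2.1 q.2.2)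
      ((Icc 0 T ×ˢ Icc 0 T) ×ˢ (Icc 0 T ×ˢ Icc 0 T)) := by
  have h₀ : (0 : ℝ) ∈ Icc 0 T := ⟨le_rfl, hT⟩
  have h := continuousOn_sewRemainder_param (S := Icc 0 T ×ˢ Icc 0 T)
    (φ := fun p => del1 g 0 p.1 p.2) (κ := κ * T ^ z₁) hz₂ (by positivity)
    (fun p hp => (hg.coboundBound_del1 h₀ hp.1 hp.2).mono (by
      gcongr
      exact max_le (abs_sub_le_of_mem_Icc h₀ hp.1) (abs_sub_le_of_mem_Icc hp.1 hp.2)))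
    (hg.continuousOn_del1_zero hT)
  exact h

lemma sewSnd_eq_cobound (hg : Sewable₂ T z₁ z₂ κ g) (hT : 0 ≤ T) (hz₂ : 1 < z₂)
    {s₁ u s₂ t₁ t₂ : ℝ} (hs₁ : s₁ ∈ Icc 0 T) (hu : u ∈ Icc 0 T) (hs₂ : s₂ ∈ Icc 0 T)
    (ht₁ : t₁ ∈ Icc 0 T) (ht₂ : t₂ ∈ Icc 0 T) :
    sewSnd g s₁ u s₂ t₁ t₂ = cobound (fun x y => sewSnd g 0 x y t₁ t₂) s₁ u s₂ := by
  have h₀ : (0 : ℝ) ∈ Icc 0 T := ⟨le_rfl, hT⟩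
  have hsplit : del1 g s₁ u s₂
      = fun x y => del1 g 0 u s₂ x y - del1 g 0 s₁ s₂ x y + del1 g 0 s₁ u x y := by
    funext x y
    simp only [del1]
    abel
  have hlim {a b : ℝ} (ha : a ∈ Icc 0 T) (hb : b ∈ Icc 0 T) :=
    tendsto_riemannSum_sew hz₂ (hg.coboundBound_del1 h₀ ha hb) ht₁ ht₂
  have hsew : sew (del1 g s₁ u s₂) t₁ t₂ = sew (del1 g 0 u s₂) t₁ t₂
      - sew (del1 g 0 s₁ s₂) t₁ t₂ + sew (del1 g 0 s₁ u) t₁ t₂ := by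
    refine sew_eq_of_tendsto ?_
    rw [hsplit]
    simpa only [riemannSum, Finset.sum_add_distrib, Finset.sum_sub_distrib] using
      ((hlim hu hs₂).sub (hlim hs₁ hs₂)).add (hlim hs₁ hu)
  simp only [sewSnd, sewRemainder, cobound]
  rw [hsew]
  simp only [del1]
  abel

lemma coboundBound_sewSnd_zero (hg : Sewable₂ T z₁ z₂ κ g) (hT : 0 ≤ T) (hz₁ : 0 ≤ z₁)
    (hz₂ : 1 < z₂) (hκ : 0 ≤ κ) {t₁ t₂ : ℝ} (ht₁ : t₁ ∈ Icc 0 T) (ht₂ : t₂ ∈ Icc 0 T) :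
    CoboundBound T z₁ (((2 : ℝ) ^ z₂ - 2)⁻¹ * κ * |t₂ - t₁| ^ z₂)
      (fun x y => sewSnd g 0 x y t₁ t₂) := by
  intro x u y D hx hu hy h₁ h₂
  rw [← hg.sewSnd_eq_cobound hT hz₂ hx hu hy ht₁ ht₂]
  have := inv_two_rpow_sub_two_nonneg hz₂
  calc ‖sewSnd g x u y t₁ t₂‖
      ≤ ((2 : ℝ) ^ z₂ - 2)⁻¹ * (κ * max |u - x| |y - u| ^ z₁) * |t₂ - t₁| ^ z₂ :=
        norm_sewRemainder_le hz₂ (hg.coboundBound_del1 hx hu hy) ht₁ ht₂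
    _ ≤ ((2 : ℝ) ^ z₂ - 2)⁻¹ * (κ * D ^ z₁) * |t₂ - t₁| ^ z₂ := by
        gcongr
        exact max_le h₁ h₂
    _ = _ := by ring

lemma del1_sew₂ (hg : Sewable₂ T z₁ z₂ κ g) (hT : 0 ≤ T) (hz₁ : 1 < z₁) (hz₂ : 1 < z₂)
    (hκ : 0 ≤ κ) {s₁ u s₂ t₁ t₂ : ℝ} (hs₁ : s₁ ∈ Icc 0 T) (hu : u ∈ Icc 0 T)
    (hs₂ : s₂ ∈ Icc 0 T) (ht₁ : t₁ ∈ Icc 0 T) (ht₂ : t₂ ∈ Icc 0 T) :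
    del1 (sew₂ g) s₁ u s₂ t₁ t₂ = sewSnd g s₁ u s₂ t₁ t₂ := by
  have hslice : ContinuousOn (fun q : ℝ × ℝ => sewSnd g 0 q.1 q.2 t₁ t₂) (Icc 0 T ×ˢ Icc 0 T) := by
    have hf : Continuous fun q : ℝ × ℝ => (q, (t₁, t₂)) := by fun_prop
    have h := (hg.continuousOn_sewSnd_zero hT (by linarith) hz₂ hκ).comp
      (s := Icc 0 T ×ˢ Icc 0 T) hf.continuousOn fun q hq => ⟨hq, ht₁, ht₂⟩
    exact h
  have hκ' : 0 ≤ ((2 : ℝ) ^ z₂ - 2)⁻¹ * κ * |t₂ - t₁| ^ z₂ := by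
    have := inv_two_rpow_sub_two_nonneg hz₂
    positivity
  rw [hg.sewSnd_eq_cobound hT hz₂ hs₁ hu hs₂ ht₁ ht₂]
  exact cobound_sewRemainder hz₁ hκ' (hg.coboundBound_sewSnd_zero hT (by linarith) hz₂ hκ ht₁ ht₂)
    (fun x hx => hg.sewSnd_zero_self hx ht₁ ht₂) hslice hs₁ hu hs₂

lemma delFull_sew₂ (hg : Sewable₂ T z₁ z₂ κ g) (hT : 0 ≤ T) (hz₁ : 1 < z₁) (hz₂ : 1 < z₂)
    (hκ : 0 ≤ κ) {s₁ u s₂ t₁ v t₂ : ℝ} (hs₁ : s₁ ∈ Icc 0 T) (hu : u ∈ Icc 0 T)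
    (hs₂ : s₂ ∈ Icc 0 T) (ht₁ : t₁ ∈ Icc 0 T) (hv : v ∈ Icc 0 T) (ht₂ : t₂ ∈ Icc 0 T) :
    delFull (sew₂ g) s₁ u s₂ t₁ v t₂ = delFull g s₁ u s₂ t₁ v t₂ := by
  have hκ' : 0 ≤ κ * max |u - s₁| |s₂ - u| ^ z₁ := by positivity
  rw [delFull, hg.del1_sew₂ hT hz₁ hz₂ hκ hs₁ hu hs₂ hv ht₂,
    hg.del1_sew₂ hT hz₁ hz₂ hκ hs₁ hu hs₂ ht₁ ht₂, hg.del1_sew₂ hT hz₁ hz₂ hκ hs₁ hu hs₂ ht₁ hv]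
  exact cobound_sewRemainder hz₂ hκ' (hg.coboundBound_del1 hs₁ hu hs₂)
    (fun x hx => hg.del1_self hs₁ hu hs₂ hx) (hg.continuousOn_del1 hs₁ hu hs₂) ht₁ hv ht₂

lemma norm_sew₂_le (hg : Sewable₂ T z₁ z₂ κ g) (hT : 0 ≤ T) (hz₁ : 1 < z₁) (hz₂ : 1 < z₂)
    (hκ : 0 ≤ κ) {s₁ s₂ t₁ t₂ : ℝ} (hs₁ : s₁ ∈ Icc 0 T) (hs₂ : s₂ ∈ Icc 0 T)
    (ht₁ : t₁ ∈ Icc 0 T) (ht₂ : t₂ ∈ Icc 0 T) :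
    ‖sew₂ g s₁ s₂ t₁ t₂‖
      ≤ ((2 : ℝ) ^ z₁ - 2)⁻¹ * ((2 : ℝ) ^ z₂ - 2)⁻¹ * κ * |s₂ - s₁| ^ z₁ * |t₂ - t₁| ^ z₂ :=
  (norm_sewRemainder_le hz₁ (hg.coboundBound_sewSnd_zero hT (by linarith) hz₂ hκ ht₁ ht₂) hs₁
    hs₂).trans_eq (by ring)

lemma continuousOn_sew₂ (hg : Sewable₂ T z₁ z₂ κ g) (hT : 0 ≤ T) (hz₁ : 1 < z₁) (hz₂ : 1 < z₂)
    (hκ : 0 ≤ κ) :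
    ContinuousOn (fun q : (ℝ × ℝ) × ℝ × ℝ => sew₂ g q.1.1 q.1.2 q.2.1 q.2.2)
      ((Icc 0 T ×ˢ Icc 0 T) ×ˢ (Icc 0 T ×ˢ Icc 0 T)) := by
  have hswap : MapsTo Prod.swap ((Icc 0 T ×ˢ Icc 0 T) ×ˢ (Icc 0 T ×ˢ Icc 0 T))
      ((Icc 0 T ×ˢ Icc 0 T) ×ˢ (Icc 0 T ×ˢ Icc 0 T)) := fun q hq => ⟨hq.2, hq.1⟩
  have hQ := (hg.continuousOn_sewSnd_zero hT (by linarith) hz₂ hκ).comp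
    continuous_swap.continuousOn hswap
  have := inv_two_rpow_sub_two_nonneg hz₂
  have hκ' : 0 ≤ ((2 : ℝ) ^ z₂ - 2)⁻¹ * κ * T ^ z₂ := by positivity
  have h := continuousOn_sewRemainder_param (S := Icc 0 T ×ˢ Icc 0 T)
    (φ := fun p x y => sewSnd g 0 x y p.1 p.2) hz₁ hκ'
    (fun p hp => (hg.coboundBound_sewSnd_zero hT (by linarith) hz₂ hκ hp.1 hp.2).mono (by
      gcongr
      exact abs_sub_le_of_mem_Icc hp.1 hp.2)) hQ
  have h' := h.comp continuous_swap.continuousOn hswap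
  exact h'

lemma finiteRectNorm_sew₂ (hg : Sewable₂ T z₁ z₂ κ g) (hT : 0 ≤ T) (hz₁ : 1 < z₁)
    (hz₂ : 1 < z₂) (hκ : 0 ≤ κ) : FiniteRectNorm T z₁ z₂ (sew₂ g) :=
  ⟨_, fun _ _ _ _ hs₁ hs₂ ht₁ ht₂ => hg.norm_sew₂_le hT hz₁ hz₂ hκ hs₁ hs₂ ht₁ ht₂⟩

lemma eq_sew₂ (hg : Sewable₂ T z₁ z₂ κ g) (hT : 0 ≤ T) (hz₁ : 1 < z₁) (hz₂ : 1 < z₂)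
    (hκ : 0 ≤ κ) {r : ℝ → ℝ → ℝ → ℝ → V} {w₁ w₂ : ℝ} (hw₁ : 1 < w₁) (hw₂ : 1 < w₂)
    (hr : FiniteRectNorm T w₁ w₂ r)
    (hδ : ∀ s₁ u s₂ t₁ v t₂ : ℝ, s₁ ∈ Icc 0 T → u ∈ Icc 0 T → s₂ ∈ Icc 0 T →
      t₁ ∈ Icc 0 T → v ∈ Icc 0 T → t₂ ∈ Icc 0 T →
      delFull r s₁ u s₂ t₁ v t₂ = delFull g s₁ u s₂ t₁ v t₂)
    {s₁ s₂ t₁ t₂ : ℝ} (hs₁ : s₁ ∈ Icc 0 T) (hs₂ : s₂ ∈ Icc 0 T) (ht₁ : t₁ ∈ Icc 0 T)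
    (ht₂ : t₂ ∈ Icc 0 T) : r s₁ s₂ t₁ t₂ = sew₂ g s₁ s₂ t₁ t₂ := by
  have hdiff : FiniteRectNorm T (min w₁ z₁) (min w₂ z₂) (r - sew₂ g) :=
    (hr.mono (by positivity) (min_le_left _ _) (by positivity) (min_le_left _ _)).sub
      ((hg.finiteRectNorm_sew₂ hT hz₁ hz₂ hκ).mono (by positivity) (min_le_right _ _)
        (by positivity) (min_le_right _ _))
  refine sub_eq_zero.1 (eq_zero_of_delFull_eq_zero (lt_min hw₁ hz₁) (lt_min hw₂ hz₂) hdiff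
    (fun s₁ u s₂ t₁ v t₂ hs₁ hu hs₂ ht₁ hv ht₂ => ?_) hs₁ hs₂ ht₁ ht₂)
  rw [delFull_sub, hδ s₁ u s₂ t₁ v t₂ hs₁ hu hs₂ ht₁ hv ht₂,
    hg.delFull_sew₂ hT hz₁ hz₂ hκ hs₁ hu hs₂ ht₁ hv ht₂, sub_self]

end Sewable₂

end Sewing

end

open Sewing

theorem stmt4_general
    {V : Type*} [NormedAddCommGroup V] [CompleteSpace V]
    (T : ℝ) (hT : 0 < T) (z₁ z₂ : ℝ) (hz₁ : 1 < z₁) (hz₂ : 1 < z₂)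
    (h : ℝ → ℝ → ℝ → ℝ → ℝ → ℝ → V)
    -- h = δg for some g ∈ 𝒞𝒞_{2,2}(V)
    (hexact : ∃ g : ℝ → ℝ → ℝ → ℝ → V,
      (ContinuousOn (fun q : (ℝ × ℝ) × ℝ × ℝ => g q.1.1 q.1.2 q.2.1 q.2.2)
        ((Icc 0 T ×ˢ Icc 0 T) ×ˢ (Icc 0 T ×ˢ Icc 0 T)) ∧
        ∀ s₁ s₂ t₁ t₂ : ℝ, s₁ ∈ Icc 0 T → s₂ ∈ Icc 0 T → t₁ ∈ Icc 0 T →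
          t₂ ∈ Icc 0 T → (s₁ = s₂ ∨ t₁ = t₂) → g s₁ s₂ t₁ t₂ = 0) ∧
      ∀ s₁ u₁ s₂ t₁ u₂ t₂ : ℝ, s₁ ∈ Icc 0 T → u₁ ∈ Icc 0 T → s₂ ∈ Icc 0 T →
        t₁ ∈ Icc 0 T → u₂ ∈ Icc 0 T → t₂ ∈ Icc 0 T →
        h s₁ u₁ s₂ t₁ u₂ t₂ = delFull g s₁ u₁ s₂ t₁ u₂ t₂)
    -- ‖h‖_{z₁,z₂} < ∞
    (hfin : ∃ (N : ℕ) (hd : Fin N → ℝ → ℝ → ℝ → ℝ → ℝ → ℝ → V) (C γ₁ γ₂ : Fin N → ℝ),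
      (∀ k, 0 ≤ C k) ∧ (∀ k, γ₁ k ∈ Set.Ioo (0:ℝ) z₁) ∧ (∀ k, γ₂ k ∈ Set.Ioo (0:ℝ) z₂) ∧
      (∀ s₁ u₁ s₂ t₁ u₂ t₂ : ℝ, s₁ ∈ Icc 0 T → u₁ ∈ Icc 0 T → s₂ ∈ Icc 0 T →
        t₁ ∈ Icc 0 T → u₂ ∈ Icc 0 T → t₂ ∈ Icc 0 T →
        h s₁ u₁ s₂ t₁ u₂ t₂ = ∑ k, hd k s₁ u₁ s₂ t₁ u₂ t₂) ∧
      (∀ k, ∀ s₁ u₁ s₂ t₁ u₂ t₂ : ℝ, s₁ ∈ Icc 0 T → u₁ ∈ Icc 0 T → s₂ ∈ Icc 0 T →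
        t₁ ∈ Icc 0 T → u₂ ∈ Icc 0 T → t₂ ∈ Icc 0 T →
        ‖hd k s₁ u₁ s₂ t₁ u₂ t₂‖ ≤ C k * |u₁ - s₁| ^ (γ₁ k) * |s₂ - u₁| ^ (z₁ - γ₁ k)
          * |u₂ - t₁| ^ (γ₂ k) * |t₂ - u₂| ^ (z₂ - γ₂ k))) :
    ∃ r : ℝ → ℝ → ℝ → ℝ → V,
      -- r ∈ 𝒞𝒞_{2,2}(V)
      (ContinuousOn (fun q : (ℝ × ℝ) × ℝ × ℝ => r q.1.1 q.1.2 q.2.1 q.2.2)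
        ((Icc 0 T ×ˢ Icc 0 T) ×ˢ (Icc 0 T ×ˢ Icc 0 T)) ∧
        ∀ s₁ s₂ t₁ t₂ : ℝ, s₁ ∈ Icc 0 T → s₂ ∈ Icc 0 T → t₁ ∈ Icc 0 T →
          t₂ ∈ Icc 0 T → (s₁ = s₂ ∨ t₁ = t₂) → r s₁ s₂ t₁ t₂ = 0) ∧
      -- δr = h
      (∀ s₁ u₁ s₂ t₁ u₂ t₂ : ℝ, s₁ ∈ Icc 0 T → u₁ ∈ Icc 0 T → s₂ ∈ Icc 0 T →
        t₁ ∈ Icc 0 T → u₂ ∈ Icc 0 T → t₂ ∈ Icc 0 T →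
        delFull r s₁ u₁ s₂ t₁ u₂ t₂ = h s₁ u₁ s₂ t₁ u₂ t₂) ∧
      -- quantitative bound, for every decomposition of h
      (∀ (N : ℕ) (hd : Fin N → ℝ → ℝ → ℝ → ℝ → ℝ → ℝ → V) (C γ₁ γ₂ : Fin N → ℝ),
        (∀ k, 0 ≤ C k) → (∀ k, γ₁ k ∈ Set.Ioo (0:ℝ) z₁) →
        (∀ k, γ₂ k ∈ Set.Ioo (0:ℝ) z₂) →
        (∀ s₁ u₁ s₂ t₁ u₂ t₂ : ℝ, s₁ ∈ Icc 0 T → u₁ ∈ Icc 0 T → s₂ ∈ Icc 0 T →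
          t₁ ∈ Icc 0 T → u₂ ∈ Icc 0 T → t₂ ∈ Icc 0 T →
          h s₁ u₁ s₂ t₁ u₂ t₂ = ∑ k, hd k s₁ u₁ s₂ t₁ u₂ t₂) →
        (∀ k, ∀ s₁ u₁ s₂ t₁ u₂ t₂ : ℝ, s₁ ∈ Icc 0 T → u₁ ∈ Icc 0 T → s₂ ∈ Icc 0 T →
          t₁ ∈ Icc 0 T → u₂ ∈ Icc 0 T → t₂ ∈ Icc 0 T →
          ‖hd k s₁ u₁ s₂ t₁ u₂ t₂‖ ≤ C k * |u₁ - s₁| ^ (γ₁ k) * |s₂ - u₁| ^ (z₁ - γ₁ k)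
            * |u₂ - t₁| ^ (γ₂ k) * |t₂ - u₂| ^ (z₂ - γ₂ k)) →
        ∀ s₁ s₂ t₁ t₂ : ℝ, s₁ ∈ Icc 0 T → s₂ ∈ Icc 0 T → t₁ ∈ Icc 0 T →
          t₂ ∈ Icc 0 T →
          ‖r s₁ s₂ t₁ t₂‖ ≤ ((2:ℝ) ^ z₁ - 2)⁻¹ * ((2:ℝ) ^ z₂ - 2)⁻¹ * (∑ k, C k)
            * |s₂ - s₁| ^ z₁ * |t₂ - t₁| ^ z₂) ∧
      -- uniqueness
      (∀ r' : ℝ → ℝ → ℝ → ℝ → V,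
        (ContinuousOn (fun q : (ℝ × ℝ) × ℝ × ℝ => r' q.1.1 q.1.2 q.2.1 q.2.2)
          ((Icc 0 T ×ˢ Icc 0 T) ×ˢ (Icc 0 T ×ˢ Icc 0 T)) ∧
          ∀ s₁ s₂ t₁ t₂ : ℝ, s₁ ∈ Icc 0 T → s₂ ∈ Icc 0 T → t₁ ∈ Icc 0 T →
            t₂ ∈ Icc 0 T → (s₁ = s₂ ∨ t₁ = t₂) → r' s₁ s₂ t₁ t₂ = 0) →
        (∀ s₁ u₁ s₂ t₁ u₂ t₂ : ℝ, s₁ ∈ Icc 0 T → u₁ ∈ Icc 0 T → s₂ ∈ Icc 0 T →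
          t₁ ∈ Icc 0 T → u₂ ∈ Icc 0 T → t₂ ∈ Icc 0 T →
          delFull r' s₁ u₁ s₂ t₁ u₂ t₂ = h s₁ u₁ s₂ t₁ u₂ t₂) →
        (∃ w₁ > (1:ℝ), ∃ w₂ > (1:ℝ), ∃ K : ℝ,
          ∀ s₁ s₂ t₁ t₂ : ℝ, s₁ ∈ Icc 0 T → s₂ ∈ Icc 0 T → t₁ ∈ Icc 0 T →
            t₂ ∈ Icc 0 T →
            ‖r' s₁ s₂ t₁ t₂‖ ≤ K * |s₂ - s₁| ^ w₁ * |t₂ - t₁| ^ w₂) →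
        ∀ s₁ s₂ t₁ t₂ : ℝ, s₁ ∈ Icc 0 T → s₂ ∈ Icc 0 T → t₁ ∈ Icc 0 T →
          t₂ ∈ Icc 0 T → r' s₁ s₂ t₁ t₂ = r s₁ s₂ t₁ t₂) := by
  obtain ⟨g, ⟨hgc, hg0⟩, hδg⟩ := hexact
  obtain ⟨N, hd, C, γ₁, γ₂, hC, hγ₁, hγ₂, hsum, hbd⟩ := hfin
  have hκ : 0 ≤ ∑ k, C k := Finset.sum_nonneg fun k _ => hC k
  have hg : Sewable₂ T z₁ z₂ (∑ k, C k) g :=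
    ⟨hgc, hg0, (mixedBound_of_eq_sum hC hγ₁ hγ₂ hsum hbd).congr hδg⟩
  refine ⟨sew₂ g, ⟨hg.continuousOn_sew₂ hT.le hz₁ hz₂ hκ, fun _ _ _ _ =>
      (hg.finiteRectNorm_sew₂ hT.le hz₁ hz₂ hκ).eq_zero (by linarith) (by linarith)⟩,
    fun _ _ _ _ _ _ hs₁ hu hs₂ ht₁ hv ht₂ =>
      (hg.delFull_sew₂ hT.le hz₁ hz₂ hκ hs₁ hu hs₂ ht₁ hv ht₂).trans
        (hδg _ _ _ _ _ _ hs₁ hu hs₂ ht₁ hv ht₂).symm,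
    fun _ _ _ _ _ hC' hγ₁' hγ₂' hsum' hbd' _ _ _ _ =>
      Sewable₂.norm_sew₂_le ⟨hgc, hg0, (mixedBound_of_eq_sum hC' hγ₁' hγ₂' hsum' hbd').congr hδg⟩
        hT.le hz₁ hz₂ (Finset.sum_nonneg fun k _ => hC' k), ?_⟩
  rintro r' - hr'δ ⟨w₁, hw₁, w₂, hw₂, hr'⟩ _ _ _ _ hs₁ hs₂ ht₁ ht₂
  exact hg.eq_sew₂ hT.le hz₁ hz₂ hκ hw₁ hw₂ hr' (fun _ _ _ _ _ _ hs₁ hu hs₂ ht₁ hv ht₂ =>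
    (hr'δ _ _ _ _ _ _ hs₁ hu hs₂ ht₁ hv ht₂).trans (hδg _ _ _ _ _ _ hs₁ hu hs₂ ht₁ hv ht₂))
    hs₁ hs₂ ht₁ ht₂

/-- **Two-dimensional sewing map `Λ`.**
Let `z₁, z₂ > 1` and let `h ∈ 𝒞𝒞_{3,3}(V)` be the coboundary of some `g ∈ 𝒞𝒞_{2,2}(V)`
with `‖h‖_{z₁,z₂} < ∞`.  Then there is an `r ∈ 𝒞𝒞_{2,2}(V)` with `δr = h` and
`‖r‖_{z₁,z₂} ≤ (2^{z₁}−2)⁻¹(2^{z₂}−2)⁻¹ ‖h‖_{z₁,z₂}` (the bound holding for every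
decomposition of `h`), and `r` is unique among solutions with some finite
`(w₁,w₂)`-norm, `w₁, w₂ > 1`. -/
theorem stmt4
    {V : Type*} [NormedAddCommGroup V] [NormedSpace ℝ V] [CompleteSpace V]
    (T : ℝ) (hT : 0 < T) (z₁ z₂ : ℝ) (hz₁ : 1 < z₁) (hz₂ : 1 < z₂)
    (h : ℝ → ℝ → ℝ → ℝ → ℝ → ℝ → V)
    -- h ∈ 𝒞𝒞_{3,3}(V)
    (hhc : ContinuousOn
      (fun q : (ℝ × ℝ × ℝ) × ℝ × ℝ × ℝ =>
        h q.1.1 q.1.2.1 q.1.2.2 q.2.1 q.2.2.1 q.2.2.2)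
      ((Icc 0 T ×ˢ Icc 0 T ×ˢ Icc 0 T) ×ˢ (Icc 0 T ×ˢ Icc 0 T ×ˢ Icc 0 T)))
    (hh0 : ∀ s₁ u₁ s₂ t₁ u₂ t₂ : ℝ, s₁ ∈ Icc 0 T → u₁ ∈ Icc 0 T → s₂ ∈ Icc 0 T →
      t₁ ∈ Icc 0 T → u₂ ∈ Icc 0 T → t₂ ∈ Icc 0 T →
      (s₁ = u₁ ∨ u₁ = s₂ ∨ t₁ = u₂ ∨ u₂ = t₂) → h s₁ u₁ s₂ t₁ u₂ t₂ = 0)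
    -- h = δg for some g ∈ 𝒞𝒞_{2,2}(V)
    (hexact : ∃ g : ℝ → ℝ → ℝ → ℝ → V,
      (ContinuousOn (fun q : (ℝ × ℝ) × ℝ × ℝ => g q.1.1 q.1.2 q.2.1 q.2.2)
        ((Icc 0 T ×ˢ Icc 0 T) ×ˢ (Icc 0 T ×ˢ Icc 0 T)) ∧
        ∀ s₁ s₂ t₁ t₂ : ℝ, s₁ ∈ Icc 0 T → s₂ ∈ Icc 0 T → t₁ ∈ Icc 0 T →
          t₂ ∈ Icc 0 T → (s₁ = s₂ ∨ t₁ = t₂) → g s₁ s₂ t₁ t₂ = 0) ∧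
      ∀ s₁ u₁ s₂ t₁ u₂ t₂ : ℝ, s₁ ∈ Icc 0 T → u₁ ∈ Icc 0 T → s₂ ∈ Icc 0 T →
        t₁ ∈ Icc 0 T → u₂ ∈ Icc 0 T → t₂ ∈ Icc 0 T →
        h s₁ u₁ s₂ t₁ u₂ t₂ = delFull g s₁ u₁ s₂ t₁ u₂ t₂)
    -- ‖h‖_{z₁,z₂} < ∞
    (hfin : ∃ (N : ℕ) (hd : Fin N → ℝ → ℝ → ℝ → ℝ → ℝ → ℝ → V) (C γ₁ γ₂ : Fin N → ℝ),
      (∀ k, 0 ≤ C k) ∧ (∀ k, γ₁ k ∈ Set.Ioo (0:ℝ) z₁) ∧ (∀ k, γ₂ k ∈ Set.Ioo (0:ℝ) z₂) ∧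
      (∀ s₁ u₁ s₂ t₁ u₂ t₂ : ℝ, s₁ ∈ Icc 0 T → u₁ ∈ Icc 0 T → s₂ ∈ Icc 0 T →
        t₁ ∈ Icc 0 T → u₂ ∈ Icc 0 T → t₂ ∈ Icc 0 T →
        h s₁ u₁ s₂ t₁ u₂ t₂ = ∑ k, hd k s₁ u₁ s₂ t₁ u₂ t₂) ∧
      (∀ k, ∀ s₁ u₁ s₂ t₁ u₂ t₂ : ℝ, s₁ ∈ Icc 0 T → u₁ ∈ Icc 0 T → s₂ ∈ Icc 0 T →
        t₁ ∈ Icc 0 T → u₂ ∈ Icc 0 T → t₂ ∈ Icc 0 T →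
        ‖hd k s₁ u₁ s₂ t₁ u₂ t₂‖ ≤ C k * |u₁ - s₁| ^ (γ₁ k) * |s₂ - u₁| ^ (z₁ - γ₁ k)
          * |u₂ - t₁| ^ (γ₂ k) * |t₂ - u₂| ^ (z₂ - γ₂ k))) :
    ∃ r : ℝ → ℝ → ℝ → ℝ → V,
      -- r ∈ 𝒞𝒞_{2,2}(V)
      (ContinuousOn (fun q : (ℝ × ℝ) × ℝ × ℝ => r q.1.1 q.1.2 q.2.1 q.2.2)
        ((Icc 0 T ×ˢ Icc 0 T) ×ˢ (Icc 0 T ×ˢ Icc 0 T)) ∧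
        ∀ s₁ s₂ t₁ t₂ : ℝ, s₁ ∈ Icc 0 T → s₂ ∈ Icc 0 T → t₁ ∈ Icc 0 T →
          t₂ ∈ Icc 0 T → (s₁ = s₂ ∨ t₁ = t₂) → r s₁ s₂ t₁ t₂ = 0) ∧
      -- δr = h
      (∀ s₁ u₁ s₂ t₁ u₂ t₂ : ℝ, s₁ ∈ Icc 0 T → u₁ ∈ Icc 0 T → s₂ ∈ Icc 0 T →
        t₁ ∈ Icc 0 T → u₂ ∈ Icc 0 T → t₂ ∈ Icc 0 T →
        delFull r s₁ u₁ s₂ t₁ u₂ t₂ = h s₁ u₁ s₂ t₁ u₂ t₂) ∧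
      -- quantitative bound, for every decomposition of h
      (∀ (N : ℕ) (hd : Fin N → ℝ → ℝ → ℝ → ℝ → ℝ → ℝ → V) (C γ₁ γ₂ : Fin N → ℝ),
        (∀ k, 0 ≤ C k) → (∀ k, γ₁ k ∈ Set.Ioo (0:ℝ) z₁) →
        (∀ k, γ₂ k ∈ Set.Ioo (0:ℝ) z₂) →
        (∀ s₁ u₁ s₂ t₁ u₂ t₂ : ℝ, s₁ ∈ Icc 0 T → u₁ ∈ Icc 0 T → s₂ ∈ Icc 0 T →
          t₁ ∈ Icc 0 T → u₂ ∈ Icc 0 T → t₂ ∈ Icc 0 T →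
          h s₁ u₁ s₂ t₁ u₂ t₂ = ∑ k, hd k s₁ u₁ s₂ t₁ u₂ t₂) →
        (∀ k, ∀ s₁ u₁ s₂ t₁ u₂ t₂ : ℝ, s₁ ∈ Icc 0 T → u₁ ∈ Icc 0 T → s₂ ∈ Icc 0 T →
          t₁ ∈ Icc 0 T → u₂ ∈ Icc 0 T → t₂ ∈ Icc 0 T →
          ‖hd k s₁ u₁ s₂ t₁ u₂ t₂‖ ≤ C k * |u₁ - s₁| ^ (γ₁ k) * |s₂ - u₁| ^ (z₁ - γ₁ k)
            * |u₂ - t₁| ^ (γ₂ k) * |t₂ - u₂| ^ (z₂ - γ₂ k)) →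
        ∀ s₁ s₂ t₁ t₂ : ℝ, s₁ ∈ Icc 0 T → s₂ ∈ Icc 0 T → t₁ ∈ Icc 0 T →
          t₂ ∈ Icc 0 T →
          ‖r s₁ s₂ t₁ t₂‖ ≤ ((2:ℝ) ^ z₁ - 2)⁻¹ * ((2:ℝ) ^ z₂ - 2)⁻¹ * (∑ k, C k)
            * |s₂ - s₁| ^ z₁ * |t₂ - t₁| ^ z₂) ∧
      -- uniqueness
      (∀ r' : ℝ → ℝ → ℝ → ℝ → V,
        (ContinuousOn (fun q : (ℝ × ℝ) × ℝ × ℝ => r' q.1.1 q.1.2 q.2.1 q.2.2)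
          ((Icc 0 T ×ˢ Icc 0 T) ×ˢ (Icc 0 T ×ˢ Icc 0 T)) ∧
          ∀ s₁ s₂ t₁ t₂ : ℝ, s₁ ∈ Icc 0 T → s₂ ∈ Icc 0 T → t₁ ∈ Icc 0 T →
            t₂ ∈ Icc 0 T → (s₁ = s₂ ∨ t₁ = t₂) → r' s₁ s₂ t₁ t₂ = 0) →
        (∀ s₁ u₁ s₂ t₁ u₂ t₂ : ℝ, s₁ ∈ Icc 0 T → u₁ ∈ Icc 0 T → s₂ ∈ Icc 0 T →
          t₁ ∈ Icc 0 T → u₂ ∈ Icc 0 T → t₂ ∈ Icc 0 T →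
          delFull r' s₁ u₁ s₂ t₁ u₂ t₂ = h s₁ u₁ s₂ t₁ u₂ t₂) →
        (∃ w₁ > (1:ℝ), ∃ w₂ > (1:ℝ), ∃ K : ℝ,
          ∀ s₁ s₂ t₁ t₂ : ℝ, s₁ ∈ Icc 0 T → s₂ ∈ Icc 0 T → t₁ ∈ Icc 0 T →
            t₂ ∈ Icc 0 T →
            ‖r' s₁ s₂ t₁ t₂‖ ≤ K * |s₂ - s₁| ^ w₁ * |t₂ - t₁| ^ w₂) →
        ∀ s₁ s₂ t₁ t₂ : ℝ, s₁ ∈ Icc 0 T → s₂ ∈ Icc 0 T → t₁ ∈ Icc 0 T →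
          t₂ ∈ Icc 0 T → r' s₁ s₂ t₁ t₂ = r s₁ s₂ t₁ t₂) :=
  stmt4_general T hT z₁ z₂ hz₁ hz₂ h hexact hfin
end

section
/- Let V be a Banach space, T > 0, and let g ∈ 𝒞₂(V) be such that ‖δg‖_μ < ∞ for some μ > 1. Let f ∈ 𝒞₁(V) and r ∈ 𝒞₂(V) with ‖r‖_μ < ∞ be such that g = δf + r. Then for all 0 ≤ s < t ≤ T the Riemann sums Σ_{i=0}^{n−1} g(u_{i+1}, u_i) over partitions s = u₀ < u₁ < ⋯ < u_n = t converge to f(t) − f(s) as the mesh max_i (u_{i+1}−u_i) tends to 0; i.e. δf is the indefinite integral of the 1-increment g. -/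
open Set

/-!
Along a partition `s = u₀ < ⋯ < uₙ = t`, the increments `δf` telescope, so the Riemann sum of
`g = δf + r` differs from `f t - f s` by `Σ r(uᵢ₊₁, uᵢ)`. Since `‖r(uᵢ₊₁, uᵢ)‖ ≤ K (uᵢ₊₁ - uᵢ)^μ
≤ K η^(μ-1) (uᵢ₊₁ - uᵢ)` for mesh `η`, that sum is at most `K η^(μ-1) (t - s)`, which tends to
`0` with `η` because `μ > 1`.
-/

open Filter Topology

lemma mem_Icc_of_forall_le_succ {α : Type*} [Preorder α] {u : ℕ → α} {n : ℕ}
    (hmono : ∀ i < n, u i ≤ u (i + 1)) {i : ℕ} (hi : i ≤ n) : u i ∈ Icc (u 0) (u n) := by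
  have hmonoOn : MonotoneOn u (Iic n) :=
    monotoneOn_of_le_add_one ordConnected_Iic fun a _ _ ha => hmono a (Nat.lt_of_succ_le ha)
  exact ⟨hmonoOn (Nat.zero_le n) hi (Nat.zero_le i), hmonoOn hi (le_refl n) hi⟩

lemma Real.rpow_le_rpow_sub_one_mul {d η μ : ℝ} (hd : 0 ≤ d) (hdη : d ≤ η) (hμ : 1 ≤ μ) :
    d ^ μ ≤ η ^ (μ - 1) * d := by
  calc d ^ μ = d ^ (μ - 1) * d := by
        rw [← Real.rpow_add_one' hd (by linarith), sub_add_cancel]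
    _ ≤ η ^ (μ - 1) * d := by gcongr

lemma sum_sub_sub_eq_sum_of_eq_sub_add {ι V : Type*} [AddCommGroup V] {g r : ι → ι → V}
    {f : ι → V} {u : ℕ → ι} {n : ℕ}
    (hg : ∀ i < n, g (u (i + 1)) (u i) = (f (u (i + 1)) - f (u i)) + r (u (i + 1)) (u i)) :
    (∑ i ∈ Finset.range n, g (u (i + 1)) (u i)) - (f (u n) - f (u 0)) =
      ∑ i ∈ Finset.range n, r (u (i + 1)) (u i) := by
  rw [Finset.sum_congr rfl fun i hi => hg i (Finset.mem_range.mp hi), Finset.sum_add_distrib,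
    Finset.sum_range_sub (fun i => f (u i))]
  abel

lemma norm_sum_le_mul_rpow_mesh {V : Type*} [SeminormedAddCommGroup V] {r : ℝ → ℝ → V}
    {u : ℕ → ℝ} {n : ℕ} {K μ η : ℝ} (hK : 0 ≤ K) (hμ : 1 ≤ μ)
    (hmono : ∀ i < n, u i ≤ u (i + 1)) (hmesh : ∀ i < n, u (i + 1) - u i ≤ η)
    (hr : ∀ i < n, ‖r (u (i + 1)) (u i)‖ ≤ K * (u (i + 1) - u i) ^ μ) :
    ‖∑ i ∈ Finset.range n, r (u (i + 1)) (u i)‖ ≤ K * η ^ (μ - 1) * (u n - u 0) := by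
  have hterm : ∀ i ∈ Finset.range n,
      ‖r (u (i + 1)) (u i)‖ ≤ K * η ^ (μ - 1) * (u (i + 1) - u i) := by
    intro i hi
    have hi := Finset.mem_range.mp hi
    calc ‖r (u (i + 1)) (u i)‖ ≤ K * (u (i + 1) - u i) ^ μ := hr i hi
      _ ≤ K * (η ^ (μ - 1) * (u (i + 1) - u i)) := by
          gcongr
          exact Real.rpow_le_rpow_sub_one_mul (sub_nonneg.mpr (hmono i hi)) (hmesh i hi) hμ
      _ = K * η ^ (μ - 1) * (u (i + 1) - u i) := (mul_assoc _ _ _).symm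
  calc ‖∑ i ∈ Finset.range n, r (u (i + 1)) (u i)‖
      ≤ ∑ i ∈ Finset.range n, ‖r (u (i + 1)) (u i)‖ := norm_sum_le _ _
    _ ≤ ∑ i ∈ Finset.range n, K * η ^ (μ - 1) * (u (i + 1) - u i) := Finset.sum_le_sum hterm
    _ = K * η ^ (μ - 1) * (u n - u 0) := by rw [← Finset.mul_sum, Finset.sum_range_sub u]

lemma exists_pos_mul_rpow_le {K μ L ε : ℝ} (hμ : 1 < μ) (hε : 0 < ε) :
    ∃ η > 0, K * η ^ (μ - 1) * L ≤ ε := by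
  have hlim : Tendsto (fun η : ℝ => K * η ^ (μ - 1) * L) (𝓝[>] 0) (𝓝 0) := by
    have hcont : ContinuousAt (fun η : ℝ => K * η ^ (μ - 1) * L) 0 :=
      ((Real.continuousAt_rpow_const 0 (μ - 1) (Or.inr (by linarith))).const_mul K).mul_const L
    simpa [Real.zero_rpow (by linarith : μ - 1 ≠ 0)] using hcont.tendsto.mono_left nhdsWithin_le_nhds
  obtain ⟨η, hηε, hη⟩ := ((hlim.eventually (ge_mem_nhds hε)).and self_mem_nhdsWithin).exists
  exact ⟨η, hη, hηε⟩

theorem stmt7_general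
    {V : Type*} [NormedAddCommGroup V]
    (T : ℝ) (μ : ℝ) (hμ : 1 < μ)
    (g : ℝ → ℝ → V)
    (f : ℝ → V)
    (r : ℝ → ℝ → V)
    (hrμ : ∃ K : ℝ, ∀ t s, t ∈ Icc 0 T → s ∈ Icc 0 T → ‖r t s‖ ≤ K * |t - s| ^ μ)
    (hdecomp : ∀ t s, t ∈ Icc 0 T → s ∈ Icc 0 T → g t s = (f t - f s) + r t s) :
    ∀ s t : ℝ, 0 ≤ s → s < t → t ≤ T →
      ∀ ε > (0:ℝ), ∃ η > (0:ℝ), ∀ (n : ℕ) (u : ℕ → ℝ),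
        u 0 = s → u n = t → (∀ i < n, u i < u (i + 1)) →
        (∀ i < n, u (i + 1) - u i ≤ η) →
        ‖(∑ i ∈ Finset.range n, g (u (i + 1)) (u i)) - (f t - f s)‖ ≤ ε := by
  obtain ⟨K, hK⟩ := hrμ
  intro s t hs _ htT ε hε
  obtain ⟨η, hη, hηε⟩ := exists_pos_mul_rpow_le (K := max K 0) (L := t - s) hμ hε
  refine ⟨η, hη, fun n u hu0 hun hmono hmesh => ?_⟩
  have hmono' : ∀ i < n, u i ≤ u (i + 1) := fun i hi => (hmono i hi).le
  have hmem : ∀ i ≤ n, u i ∈ Icc 0 T := fun i hi =>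
    Icc_subset_Icc (hu0 ▸ hs) (hun ▸ htT) (mem_Icc_of_forall_le_succ hmono' hi)
  have hr : ∀ i < n, ‖r (u (i + 1)) (u i)‖ ≤ max K 0 * (u (i + 1) - u i) ^ μ := fun i hi => by
    calc ‖r (u (i + 1)) (u i)‖ ≤ K * |u (i + 1) - u i| ^ μ := hK _ _ (hmem _ hi) (hmem _ hi.le)
      _ ≤ max K 0 * (u (i + 1) - u i) ^ μ := by
          rw [abs_of_nonneg (sub_nonneg.mpr (hmono' i hi))]
          gcongr
          · exact Real.rpow_nonneg (sub_nonneg.mpr (hmono' i hi)) μ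
          · exact le_max_left K 0
  rw [← hu0, ← hun,
    sum_sub_sub_eq_sum_of_eq_sub_add fun i hi => hdecomp _ _ (hmem _ hi) (hmem _ hi.le)]
  calc _ ≤ max K 0 * η ^ (μ - 1) * (u n - u 0) :=
        norm_sum_le_mul_rpow_mesh (le_max_right _ _) hμ.le hmono' hmesh hr
    _ ≤ ε := by rwa [hu0, hun]

/-- **Integration of small 1-increments.**
Let `V` be a Banach space, `T > 0`, and `g ∈ 𝒞₂(V)` with `‖δg‖_μ < ∞` for some `μ > 1`.
If `f ∈ 𝒞₁(V)` and `r ∈ 𝒞₂(V)` with `‖r‖_μ < ∞` are such that `g = δf + r`, then for all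
`0 ≤ s < t ≤ T` the Riemann sums `Σ g(u_{i+1}, u_i)` over partitions of `[s,t]` converge
to `f(t) - f(s)` as the mesh tends to `0`. -/
theorem stmt7
    {V : Type*} [NormedAddCommGroup V] [NormedSpace ℝ V]
    (T : ℝ) (hT : 0 < T) (μ : ℝ) (hμ : 1 < μ)
    (g : ℝ → ℝ → V)
    (hgc : ContinuousOn (fun p : ℝ × ℝ => g p.1 p.2) (Icc 0 T ×ˢ Icc 0 T))
    (hg0 : ∀ t ∈ Icc 0 T, g t t = 0)
    -- `‖δg‖_μ < ∞`
    (hfin : ∃ (N : ℕ) (hdec : Fin N → ℝ → ℝ → ℝ → V) (C ρ : Fin N → ℝ),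
      (∀ k, 0 ≤ C k) ∧ (∀ k, ρ k ∈ Set.Ioo (0:ℝ) μ) ∧
      (∀ t u s, t ∈ Icc 0 T → u ∈ Icc 0 T → s ∈ Icc 0 T →
        g t s - g t u - g u s = ∑ k, hdec k t u s) ∧
      (∀ k, ∀ t u s, t ∈ Icc 0 T → u ∈ Icc 0 T → s ∈ Icc 0 T →
        ‖hdec k t u s‖ ≤ C k * |t - u| ^ (ρ k) * |u - s| ^ (μ - ρ k)))
    (f : ℝ → V) (hf : ContinuousOn f (Icc 0 T))
    (r : ℝ → ℝ → V)
    (hrc : ContinuousOn (fun p : ℝ × ℝ => r p.1 p.2) (Icc 0 T ×ˢ Icc 0 T))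
    (hr0 : ∀ t ∈ Icc 0 T, r t t = 0)
    (hrμ : ∃ K : ℝ, ∀ t s, t ∈ Icc 0 T → s ∈ Icc 0 T → ‖r t s‖ ≤ K * |t - s| ^ μ)
    (hdecomp : ∀ t s, t ∈ Icc 0 T → s ∈ Icc 0 T → g t s = (f t - f s) + r t s) :
    ∀ s t : ℝ, 0 ≤ s → s < t → t ≤ T →
      ∀ ε > (0:ℝ), ∃ η > (0:ℝ), ∀ (n : ℕ) (u : ℕ → ℝ),
        u 0 = s → u n = t → (∀ i < n, u i < u (i + 1)) →
        (∀ i < n, u (i + 1) - u i ≤ η) →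
        ‖(∑ i ∈ Finset.range n, g (u (i + 1)) (u i)) - (f t - f s)‖ ≤ ε :=
  stmt7_general T μ hμ g f r hrμ hdecomp
end

section
/- Define Q : ℝ² → ℂ by Q(ξ,η) = ∫₀¹ e^{isξ} ( ∫₀^s e^{ivη} dv ) ds. Then: (i) for every ξ ≠ 0, Q(ξ,−ξ) = ((1 − cos ξ) + i(ξ − sin ξ))/ξ²; (ii) there is a constant c such that |Q(ξ,η)| ≤ c, |Q(ξ,η)| ≤ c/|ξ|, |Q(ξ,η)| ≤ c/|η|, and |Q(ξ,η)| ≤ c(1/(|ξ||η|) + 1/(|ξ+η| min(|ξ|,|η|))) for all ξ,η ≠ 0 with ξ+η ≠ 0; (iii) for every α ∈ (1/3, 1/2], the integral ∫_{ℝ²} |Q(ξ,η)|² |ξ|^{1−2α} |η|^{1−2α} dξ dη is finite. -/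
open MeasureTheory intervalIntegral Complex

/-- The oscillatory kernel `Q(ξ,η) = ∫₀¹ e^{isξ} (∫₀^s e^{ivη} dv) ds`. -/
noncomputable def Qker (ξ η : ℝ) : ℂ :=
  ∫ s in (0:ℝ)..1, Complex.exp (Complex.I * s * ξ) *
    ∫ v in (0:ℝ)..s, Complex.exp (Complex.I * v * η)

/-!
Integrating the inner integral gives, for `η ≠ 0`, `Q(ξ,η) = (E(ξ+η) - E(ξ)) / (iη)`
with `E(μ) = ∫₀¹ e^{isμ} ds` and `|E(μ)| ≤ min(1, 2/|μ|) ≤ 3/(1+|μ|)`; integrating by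
parts in `s` instead gives `|Q(ξ,η)| ≤ 2/|ξ|`. Together, with `⟨x⟩ = 1 + |x|`,
`|Q(ξ,η)| ≤ 6 ⟨η⟩⁻¹ (⟨ξ⟩⁻¹ + ⟨ξ+η⟩⁻¹)`. For `β = 1 - 2α ∈ [0, 1/3)` the inequality
`|ξ|^β ≤ |ξ+η|^β + |η|^β` then dominates `|Q|² |ξ|^β |η|^β` by products `f(η) g(ξ)` and
`f(η) g(ξ+η)` of the integrable functions `⟨x⟩⁻² |x|^γ`, `γ ∈ {0, β, 2β} ⊂ [0, 1)`, and the
shear `(ξ,η) ↦ (η, ξ+η)` preserves Lebesgue measure.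
-/

lemma norm_cexp_I_mul_mul (x μ : ℝ) : ‖cexp (I * x * μ)‖ = 1 := by
  simp [norm_exp]

lemma continuous_cexp_I_mul_mul (μ : ℝ) : Continuous fun v : ℝ => cexp (I * v * μ) := by
  fun_prop

lemma intervalIntegrable_cexp_I_mul_mul (a b μ : ℝ) :
    IntervalIntegrable (fun v : ℝ => cexp (I * v * μ)) volume a b :=
  (continuous_cexp_I_mul_mul μ).intervalIntegrable a b

lemma integral_cexp_I_mul_mul (a b : ℝ) {μ : ℝ} (hμ : μ ≠ 0) :
    ∫ v in a..b, cexp (I * v * μ) = (cexp (I * b * μ) - cexp (I * a * μ)) / (I * μ) := by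
  simp only [mul_right_comm I _ (μ : ℂ)]
  exact integral_exp_mul_complex (c := I * μ) (by simpa using hμ)

lemma norm_integral_cexp_I_mul_mul_le (a b μ : ℝ) :
    ‖∫ v in a..b, cexp (I * v * μ)‖ ≤ |b - a| := by
  simpa using norm_integral_le_of_norm_le_const (C := 1) (a := a) (b := b)
    fun x _ => (norm_cexp_I_mul_mul x μ).le

lemma norm_integral_cexp_I_mul_mul_le_two_div (a b : ℝ) {μ : ℝ} (hμ : μ ≠ 0) :
    ‖∫ v in a..b, cexp (I * v * μ)‖ ≤ 2 / |μ| := by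
  rw [integral_cexp_I_mul_mul a b hμ, norm_div]
  have hnum : ‖cexp (I * b * μ) - cexp (I * a * μ)‖ ≤ 2 := by
    calc _ ≤ ‖cexp (I * b * μ)‖ + ‖cexp (I * a * μ)‖ := norm_sub_le _ _
      _ = 2 := by rw [norm_cexp_I_mul_mul, norm_cexp_I_mul_mul]; norm_num
  simpa using div_le_div_of_nonneg_right hnum (abs_nonneg μ)

lemma le_three_div_one_add_abs {a x : ℝ} (h₁ : a ≤ 1) (h₂ : x ≠ 0 → a ≤ 2 / |x|) :
    a ≤ 3 / (1 + |x|) := by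
  rw [le_div_iff₀ (by positivity)]
  rcases eq_or_ne x 0 with rfl | hx
  · rw [abs_zero, add_zero, mul_one]; linarith
  · have := (le_div_iff₀ (abs_pos.2 hx)).1 (h₂ hx)
    linarith

lemma norm_integral_cexp_I_mul_mul_le_three_div (μ : ℝ) :
    ‖∫ s in (0:ℝ)..1, cexp (I * s * μ)‖ ≤ 3 / (1 + |μ|) :=
  le_three_div_one_add_abs (by simpa using norm_integral_cexp_I_mul_mul_le 0 1 μ)
    (norm_integral_cexp_I_mul_mul_le_two_div 0 1)

lemma Qker_eq_div (ξ : ℝ) {η : ℝ} (hη : η ≠ 0) :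
    Qker ξ η = ((∫ s in (0:ℝ)..1, cexp (I * s * (ξ + η : ℝ))) -
      ∫ s in (0:ℝ)..1, cexp (I * s * ξ)) / (I * η) := by
  have hintegrand (s : ℝ) : cexp (I * s * ξ) * ∫ v in (0:ℝ)..s, cexp (I * v * η) =
      (cexp (I * s * (ξ + η : ℝ)) - cexp (I * s * ξ)) / (I * η) := by
    rw [integral_cexp_I_mul_mul 0 s hη, ofReal_add, mul_add, exp_add]
    simp only [ofReal_zero, mul_zero, zero_mul, exp_zero]
    ring
  simp only [Qker, hintegrand, intervalIntegral.integral_div]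
  rw [intervalIntegral.integral_sub (intervalIntegrable_cexp_I_mul_mul _ _ _)
    (intervalIntegrable_cexp_I_mul_mul _ _ _)]

lemma Qker_neg_self {ξ : ℝ} (hξ : ξ ≠ 0) :
    Qker ξ (-ξ) =
      (((1 - Real.cos ξ : ℝ) : ℂ) + I * ((ξ - Real.sin ξ : ℝ) : ℂ)) / (ξ : ℂ) ^ 2 := by
  have hξ' : (ξ : ℂ) ≠ 0 := by exact_mod_cast hξ
  have hexp : cexp (I * (1 : ℝ) * ξ) = Real.cos ξ + Real.sin ξ * I := by
    rw [ofReal_one, mul_one, mul_comm, exp_mul_I, ← ofReal_cos, ← ofReal_sin]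
  rw [Qker_eq_div ξ (neg_ne_zero.2 hξ), add_neg_cancel, integral_cexp_I_mul_mul 0 1 hξ, hexp]
  simp only [ofReal_zero, mul_zero, zero_mul, exp_zero, intervalIntegral.integral_const, sub_zero,
    one_smul, ofReal_neg, ofReal_sub, ofReal_one]
  field_simp
  ring_nf
  rw [I_sq, I_pow_three]
  ring

lemma norm_Qker_le_one (ξ η : ℝ) : ‖Qker ξ η‖ ≤ 1 := by
  refine (intervalIntegral.norm_integral_le_of_norm_le_const (C := 1) fun s hs => ?_).trans_eq
    (by simp)
  rw [Set.uIoc_of_le zero_le_one] at hs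
  rw [norm_mul, norm_cexp_I_mul_mul, one_mul]
  calc _ ≤ |s - 0| := norm_integral_cexp_I_mul_mul_le 0 s η
    _ ≤ 1 := by rw [sub_zero, abs_of_pos hs.1]; exact hs.2

lemma norm_Qker_le_div_abs_right (ξ : ℝ) {η : ℝ} (hη : η ≠ 0) :
    ‖Qker ξ η‖ ≤ (‖∫ s in (0:ℝ)..1, cexp (I * s * (ξ + η : ℝ))‖ +
      ‖∫ s in (0:ℝ)..1, cexp (I * s * ξ)‖) / |η| := by
  rw [Qker_eq_div ξ hη, norm_div]
  simpa using div_le_div_of_nonneg_right (norm_sub_le _ _) (abs_nonneg η)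

lemma norm_Qker_le_two_div_abs_right (ξ : ℝ) {η : ℝ} (hη : η ≠ 0) :
    ‖Qker ξ η‖ ≤ 2 / |η| := by
  refine (norm_Qker_le_div_abs_right ξ hη).trans (div_le_div_of_nonneg_right ?_ (abs_nonneg η))
  have h₁ := norm_integral_cexp_I_mul_mul_le 0 1 (ξ + η)
  have h₂ := norm_integral_cexp_I_mul_mul_le 0 1 ξ
  rw [sub_zero, abs_one] at h₁ h₂
  linarith

lemma norm_Qker_le_of_ne_zero {ξ η : ℝ} (hξ : ξ ≠ 0) (hη : η ≠ 0) (hξη : ξ + η ≠ 0) :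
    ‖Qker ξ η‖ ≤ 2 * (1 / (|ξ| * |η|) + 1 / (|ξ + η| * min |ξ| |η|)) := by
  have h₁ := norm_integral_cexp_I_mul_mul_le_two_div 0 1 hξη
  have h₂ := norm_integral_cexp_I_mul_mul_le_two_div 0 1 hξ
  have hmin : 1 / (|ξ + η| * |η|) ≤ 1 / (|ξ + η| * min |ξ| |η|) := by
    gcongr
    exact min_le_right _ _
  calc ‖Qker ξ η‖ ≤ (2 / |ξ + η| + 2 / |ξ|) / |η| :=
        (norm_Qker_le_div_abs_right ξ hη).trans (by gcongr)
    _ = 2 * (1 / (|ξ| * |η|) + 1 / (|ξ + η| * |η|)) := by ring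
    _ ≤ _ := by gcongr

lemma norm_Qker_le_two_div_abs_left {ξ : ℝ} (η : ℝ) (hξ : ξ ≠ 0) :
    ‖Qker ξ η‖ ≤ 2 / |ξ| := by
  set G : ℝ → ℂ := fun s => ∫ v in (0:ℝ)..s, cexp (I * v * η)
  set U : ℝ → ℂ := fun s => cexp (I * s * ξ) / (I * ξ)
  have hG (s : ℝ) : HasDerivAt G (cexp (I * s * η)) s :=
    integral_hasDerivAt_right (intervalIntegrable_cexp_I_mul_mul _ _ _)
      ((continuous_cexp_I_mul_mul η).stronglyMeasurableAtFilter _ _)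
      (continuous_cexp_I_mul_mul η).continuousAt
  have hU (s : ℝ) : HasDerivAt U (cexp (I * s * ξ)) s := by
    have h := (((hasDerivAt_id (s : ℂ)).const_mul (I * ξ)).cexp.div_const (I * ξ)).comp_ofReal
    convert h using 1
    · ext t; simp only [U, id]; ring_nf
    · have hξ' : (ξ : ℂ) ≠ 0 := by exact_mod_cast hξ
      simp only [id]; field_simp
  have hnormU (s : ℝ) : ‖U s‖ = 1 / |ξ| := by simp [U, norm_cexp_I_mul_mul]
  have hIBP : Qker ξ η = G 1 * U 1 - ∫ s in (0:ℝ)..1, cexp (I * s * η) * U s := by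
    have h := integral_mul_deriv_eq_deriv_mul (a := 0) (b := 1) (fun s _ => hG s)
      (fun s _ => hU s) (intervalIntegrable_cexp_I_mul_mul _ _ _)
      (intervalIntegrable_cexp_I_mul_mul _ _ _)
    simp only [G, intervalIntegral.integral_same, zero_mul, sub_zero] at h
    rw [Qker, ← h]
    simp_rw [mul_comm]
  have hG1 : ‖G 1‖ ≤ 1 := by simpa using norm_integral_cexp_I_mul_mul_le 0 1 η
  have hrest : ‖∫ s in (0:ℝ)..1, cexp (I * s * η) * U s‖ ≤ 1 / |ξ| := by
    simpa using intervalIntegral.norm_integral_le_of_norm_le_const (a := 0) (b := 1)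
      fun s _ => (by rw [norm_mul, norm_cexp_I_mul_mul, one_mul, hnormU] :
        ‖cexp (I * s * η) * U s‖ ≤ 1 / |ξ|)
  calc ‖Qker ξ η‖ ≤ ‖G 1‖ * ‖U 1‖ + 1 / |ξ| := by
        rw [hIBP, ← norm_mul]; exact (norm_sub_le _ _).trans (by gcongr)
    _ ≤ 1 * (1 / |ξ|) + 1 / |ξ| := by rw [hnormU]; gcongr
    _ = 2 / |ξ| := by ring

lemma norm_Qker_le_three_div_one_add_abs_left (ξ η : ℝ) : ‖Qker ξ η‖ ≤ 3 / (1 + |ξ|) :=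
  le_three_div_one_add_abs (norm_Qker_le_one ξ η) (norm_Qker_le_two_div_abs_left η)

lemma norm_Qker_le_inv_one_add_abs (ξ η : ℝ) :
    ‖Qker ξ η‖ ≤ 6 * (1 + |η|)⁻¹ * ((1 + |ξ|)⁻¹ + (1 + |ξ + η|)⁻¹) := by
  have hleft := norm_Qker_le_three_div_one_add_abs_left ξ η
  rcases le_or_gt |η| 1 with hη | hη
  · have hq : 1 ≤ 2 * (1 + |η|)⁻¹ := by
      rw [← div_eq_mul_inv, le_div_iff₀ (by positivity)]; linarith
    calc ‖Qker ξ η‖ ≤ 3 * (1 + |ξ|)⁻¹ := by rwa [← div_eq_mul_inv]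
      _ ≤ 3 * (1 + |ξ|)⁻¹ * (2 * (1 + |η|)⁻¹) := le_mul_of_one_le_right (by positivity) hq
      _ = 6 * (1 + |η|)⁻¹ * (1 + |ξ|)⁻¹ := by ring
      _ ≤ _ := by gcongr; exact le_add_of_nonneg_right (by positivity)
  · have hη' : η ≠ 0 := by rintro rfl; norm_num at hη
    have hinv : 1 / |η| ≤ 2 * (1 + |η|)⁻¹ := by
      rw [← div_eq_mul_inv, div_le_div_iff₀ (by positivity) (by positivity)]; linarith
    calc ‖Qker ξ η‖ ≤ (3 / (1 + |ξ + η|) + 3 / (1 + |ξ|)) * (1 / |η|) := by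
          rw [mul_one_div]
          exact (norm_Qker_le_div_abs_right ξ hη').trans (by
            gcongr <;> apply norm_integral_cexp_I_mul_mul_le_three_div)
      _ ≤ (3 / (1 + |ξ + η|) + 3 / (1 + |ξ|)) * (2 * (1 + |η|)⁻¹) := by gcongr
      _ = _ := by ring

lemma abs_add_rpow_le {p : ℝ} (hp₀ : 0 ≤ p) (hp₁ : p ≤ 1) (x y : ℝ) :
    |x + y| ^ p ≤ |x| ^ p + |y| ^ p :=
  (Real.rpow_le_rpow (abs_nonneg _) (abs_add_le x y) hp₀).trans
    (Real.rpow_add_le_add_rpow (abs_nonneg x) (abs_nonneg y) hp₀ hp₁)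

noncomputable def decayWeight (γ x : ℝ) : ℝ := (1 + |x|)⁻¹ ^ 2 * |x| ^ γ

lemma integrable_decayWeight {γ : ℝ} (hγ₀ : 0 ≤ γ) (hγ₁ : γ < 1) :
    Integrable (decayWeight γ) := by
  refine (integrable_one_add_norm (E := ℝ) (μ := volume) (r := 2 - γ)
    (by rw [Module.finrank_self, Nat.cast_one]; linarith)).mono'
    (by unfold decayWeight; fun_prop) (ae_of_all _ fun x => ?_)
  have ht : 0 < 1 + |x| := by positivity
  rw [Real.norm_eq_abs, abs_of_nonneg (by unfold decayWeight; positivity), Real.norm_eq_abs,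
    decayWeight, neg_sub, Real.rpow_sub ht, Real.rpow_two, div_eq_mul_inv, mul_comm, inv_pow]
  gcongr
  linarith [le_abs_self x]

lemma norm_Qker_sq_mul_rpow_le {β : ℝ} (hβ₀ : 0 ≤ β) (hβ₁ : β ≤ 1) (ξ η : ℝ) :
    ‖Qker ξ η‖ ^ 2 * |ξ| ^ β * |η| ^ β ≤ 72 * (decayWeight β ξ * decayWeight β η +
      decayWeight β η * decayWeight β (ξ + η) +
      decayWeight (2 * β) η * decayWeight 0 (ξ + η)) := by
  set p := (1 + |ξ|)⁻¹
  set q := (1 + |η|)⁻¹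
  set r := (1 + |ξ + η|)⁻¹
  set a := |ξ| ^ β
  set b := |η| ^ β
  set c := |ξ + η| ^ β
  have hQ := norm_Qker_le_inv_one_add_abs ξ η
  have hac : a ≤ c + b := by
    simpa [a, b, c, abs_neg] using abs_add_rpow_le hβ₀ hβ₁ (ξ + η) (-η)
  have hb2 : |η| ^ (2 * β) = b ^ 2 := by
    rw [mul_comm, Real.rpow_mul (abs_nonneg η), Real.rpow_two]
  calc ‖Qker ξ η‖ ^ 2 * a * b ≤ (6 * q * (p + r)) ^ 2 * a * b := by gcongr
    _ = 36 * (q ^ 2 * a * b) * (p + r) ^ 2 := by ring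
    _ ≤ 36 * (q ^ 2 * a * b) * (2 * (p ^ 2 + r ^ 2)) := by
        gcongr; linarith [sq_nonneg (p - r)]
    _ = 72 * (q ^ 2 * p ^ 2 * a * b + q ^ 2 * r ^ 2 * a * b) := by ring
    _ ≤ 72 * (q ^ 2 * p ^ 2 * a * b + q ^ 2 * r ^ 2 * (c + b) * b) := by gcongr
    _ = _ := by simp only [decayWeight, hb2, Real.rpow_zero]; ring

theorem MeasureTheory.Integrable.mul_comp_snd_add {G L : Type*} [MeasurableSpace G]
    [AddGroup G] [MeasurableAdd₂ G] {μ : Measure G} [SFinite μ] [μ.IsAddRightInvariant]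
    [NormedRing L] {f g : G → L} (hf : Integrable f μ) (hg : Integrable g μ) :
    Integrable (fun z : G × G => f z.2 * g (z.1 + z.2)) (μ.prod μ) :=
  (measurePreserving_prod_add_swap_right μ μ).integrable_comp_of_integrable (hf.mul_prod hg)

lemma lintegral_norm_Qker_sq_mul_rpow_lt_top {β : ℝ} (hβ₀ : 0 ≤ β) (hβ : β < 1 / 2) :
    ∫⁻ z : ℝ × ℝ, ENNReal.ofReal (‖Qker z.1 z.2‖ ^ 2 * |z.1| ^ β * |z.2| ^ β) < ⊤ := by
  have hw := integrable_decayWeight hβ₀ (by linarith)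
  have hw₂ := integrable_decayWeight (γ := 2 * β) (by linarith) (by linarith)
  have hw₀ := integrable_decayWeight le_rfl one_pos
  have hdom : Integrable (fun z : ℝ × ℝ => 72 * (decayWeight β z.1 * decayWeight β z.2 +
      decayWeight β z.2 * decayWeight β (z.1 + z.2) +
      decayWeight (2 * β) z.2 * decayWeight 0 (z.1 + z.2))) (volume.prod volume) :=
    (((hw.mul_prod hw).add (hw.mul_comp_snd_add hw)).add
      (hw₂.mul_comp_snd_add hw₀)).const_mul 72
  have hbound (z : ℝ × ℝ) := norm_Qker_sq_mul_rpow_le hβ₀ (by linarith) z.1 z.2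
  refine (lintegral_mono fun z => ENNReal.ofReal_le_ofReal (hbound z)).trans_lt ?_
  exact hdom.lintegral_lt_top

/-- **Estimates on the kernel `Q`.**
(i) `Q(ξ,−ξ) = ((1 − cos ξ) + i(ξ − sin ξ))/ξ²` for `ξ ≠ 0`;
(ii) uniform bounds `|Q| ≤ c`, `|Q| ≤ c/|ξ|`, `|Q| ≤ c/|η|` and
`|Q| ≤ c(1/(|ξ||η|) + 1/(|ξ+η| min(|ξ|,|η|)))`;
(iii) for `α ∈ (1/3, 1/2]`, `∫_{ℝ²} |Q(ξ,η)|² |ξ|^{1−2α} |η|^{1−2α} dξ dη < ∞`. -/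
theorem stmt10 :
    (∀ ξ : ℝ, ξ ≠ 0 →
      Qker ξ (-ξ) = (((1 - Real.cos ξ : ℝ) : ℂ) +
        Complex.I * ((ξ - Real.sin ξ : ℝ) : ℂ)) / ((ξ : ℂ) ^ 2)) ∧
    (∃ c : ℝ, ∀ ξ η : ℝ,
      ‖Qker ξ η‖ ≤ c ∧
      (ξ ≠ 0 → ‖Qker ξ η‖ ≤ c / |ξ|) ∧
      (η ≠ 0 → ‖Qker ξ η‖ ≤ c / |η|) ∧
      (ξ ≠ 0 → η ≠ 0 → ξ + η ≠ 0 →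
        ‖Qker ξ η‖ ≤ c * (1 / (|ξ| * |η|) + 1 / (|ξ + η| * min |ξ| |η|)))) ∧
    (∀ α : ℝ, 1/3 < α → α ≤ 1/2 →
      (∫⁻ q : ℝ × ℝ,
        ENNReal.ofReal (‖Qker q.1 q.2‖ ^ 2 * |q.1| ^ (1 - 2*α) * |q.2| ^ (1 - 2*α)))
        < ⊤) := by
  refine ⟨fun ξ => Qker_neg_self, ⟨2, fun ξ η => ⟨?_, ?_, ?_, ?_⟩⟩, ?_⟩
  · exact (norm_Qker_le_one ξ η).trans one_le_two
  · exact norm_Qker_le_two_div_abs_left η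
  · exact norm_Qker_le_two_div_abs_right ξ
  · exact norm_Qker_le_of_ne_zero
  · intro α hα₁ hα₂
    exact lintegral_norm_Qker_sq_mul_rpow_lt_top (by linarith) (by linarith)
end

section
/- Let V be a Banach space, T > 0 and k ≥ 1. Then: (i) δ(δg) = 0 for every g ∈ 𝒞_k(V); (ii) conversely, for every h ∈ 𝒞_{k+1}(V) with δh = 0 there exists g ∈ 𝒞_k(V) with δg = h. In other words, the complex (𝒞_*(V), δ) of increments is acyclic: every k-cocycle (k ≥ 2) is a coboundary. -/
open Set

/-- The cube `[0,T]^k`. -/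
def cube (T : ℝ) (k : ℕ) : Set (Fin k → ℝ) := {t | ∀ j, t j ∈ Set.Icc 0 T}

/-- Membership in `𝒞_k(V)`: continuity on `[0,T]^k` and vanishing whenever two
consecutive arguments coincide. -/
def IsIncrement {V : Type*} [NormedAddCommGroup V] (T : ℝ) (k : ℕ)
    (g : (Fin k → ℝ) → V) : Prop :=
  ContinuousOn g (cube T k) ∧
  ∀ t ∈ cube T k, (∃ i j : Fin k, (j : ℕ) = (i : ℕ) + 1 ∧ t i = t j) → g t = 0

/-- The coboundary `δ : 𝒞_k(V) → 𝒞_{k+1}(V)`,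
`(δg)(t₁,…,t_{k+1}) = Σ_{i=1}^{k+1} (−1)^{i+1} g(t₁,…,t̂_i,…,t_{k+1})`. -/
noncomputable def cob {V : Type*} [NormedAddCommGroup V] [NormedSpace ℝ V] {k : ℕ}
    (g : (Fin k → ℝ) → V) : (Fin (k + 1) → ℝ) → V :=
  fun t => ∑ i : Fin (k + 1), ((-1 : ℝ) ^ (i : ℕ)) • g (fun j => t (i.succAbove j))

/-! `δ(δg) = 0` because the terms of the double sum cancel in pairs: removing two positions
from a tuple in either order gives the same tuple, and the two orders carry opposite signs.
Conversely, a cocycle `h` is the coboundary of its cone `g = h(a, ·)` at any base point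
`a ∈ [0,T]`: the cocycle identity at `(a, t)` reads `h t - δg t = 0`. -/

open Finset

namespace Fin

variable {n : ℕ}

/-- Deleting entry `i` and then entry `j` of a tuple removes the same two positions as deleting
entry `i.succAbove j` and then entry `j.predAbove i`. -/
def faceSwap (p : Fin (n + 2) × Fin (n + 1)) : Fin (n + 2) × Fin (n + 1) :=
  (p.1.succAbove p.2, p.2.predAbove p.1)

theorem faceSwap_involutive : Function.Involutive (faceSwap (n := n)) := fun p =>
  Prod.ext (succAbove_succAbove_predAbove p.1 p.2) (predAbove_predAbove_succAbove p.1 p.2)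

theorem removeNth_removeNth_faceSwap {α : Type*} (p : Fin (n + 2) × Fin (n + 1))
    (t : Fin (n + 2) → α) :
    (faceSwap p).2.removeNth ((faceSwap p).1.removeNth t) = p.2.removeNth (p.1.removeNth t) :=
  (removeNth_removeNth_eq_swap t p.2 p.1).symm

theorem neg_one_pow_faceSwap {R : Type*} [Monoid R] [HasDistribNeg R]
    (p : Fin (n + 2) × Fin (n + 1)) :
    (-1 : R) ^ (((faceSwap p).1 : ℕ) + (faceSwap p).2) = -(-1) ^ ((p.1 : ℕ) + p.2) := by
  obtain ⟨i, j⟩ := p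
  rcases lt_or_ge j.castSucc i with h | h
  · have hval : ((i.succAbove j : ℕ) + (j.predAbove i : ℕ)) + 1 = i + j := by
      rw [succAbove_of_castSucc_lt _ _ h, predAbove_of_castSucc_lt _ _ h, val_castSucc, val_pred]
      have : (j : ℕ) < i := h
      omega
    simp only [faceSwap, ← hval, pow_succ, mul_neg_one, neg_neg]
  · have hval : (i.succAbove j : ℕ) + (j.predAbove i : ℕ) = (i + j) + 1 := by
      rw [succAbove_of_le_castSucc _ _ h, predAbove_of_le_castSucc _ _ h, val_succ, coe_castPred]
      omega
    simp only [faceSwap, hval, pow_succ, mul_neg_one]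

end Fin

section Coboundary

variable {V : Type*} [NormedAddCommGroup V] [NormedSpace ℝ V]

theorem cob_apply {k : ℕ} (g : (Fin k → ℝ) → V) (t : Fin (k + 1) → ℝ) :
    cob g t = ∑ i : Fin (k + 1), ((-1 : ℝ) ^ (i : ℕ)) • g (i.removeNth t) :=
  rfl

theorem cob_cob {k : ℕ} (g : (Fin k → ℝ) → V) (t : Fin (k + 2) → ℝ) : cob (cob g) t = 0 := by
  set f : Fin (k + 2) × Fin (k + 1) → V := fun p =>
    ((-1 : ℝ) ^ ((p.1 : ℕ) + p.2)) • g (p.2.removeNth (p.1.removeNth t))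
  have hexpand : cob (cob g) t = ∑ p, f p := by
    simp only [cob_apply, Fintype.sum_prod_type, smul_sum, smul_smul, pow_add, f]
  have hanti : ∑ p, f p = -∑ p, f p := by
    rw [← sum_neg_distrib]
    refine Fintype.sum_equiv (Fin.faceSwap_involutive.toPerm _) _ _ fun p => ?_
    simp only [f, Function.Involutive.coe_toPerm, Fin.removeNth_removeNth_faceSwap,
      Fin.neg_one_pow_faceSwap, neg_smul, neg_neg]
  have htwice : (2 : ℝ) • ∑ p, f p = 0 := by
    rw [two_smul]
    nth_rw 1 [hanti]
    exact neg_add_cancel _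
  rw [hexpand]
  exact (smul_eq_zero.mp htwice).resolve_left two_ne_zero

theorem cob_cons {k : ℕ} (h : (Fin (k + 1) → ℝ) → V) (a : ℝ) (t : Fin (k + 1) → ℝ) :
    cob h (Fin.cons a t) = h t - cob (fun u => h (Fin.cons a u)) t := by
  have hsucc : ∀ i : Fin (k + 1),
      i.succ.removeNth (Fin.cons a t : Fin (k + 2) → ℝ) = Fin.cons a (i.removeNth t) := by
    intro i
    funext j
    refine Fin.cases ?_ (fun c => ?_) j
    · simp [Fin.removeNth_apply]
    · simp [Fin.removeNth_apply, Fin.succ_succAbove_succ]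
  rw [cob_apply, Fin.sum_univ_succ, cob_apply, sub_eq_add_neg, ← sum_neg_distrib]
  simp only [Fin.val_zero, pow_zero, one_smul, Fin.removeNth_zero, Fin.tail_cons, hsucc,
    Fin.val_succ, pow_succ, mul_neg_one, neg_smul]

end Coboundary

theorem cons_mem_cube {T : ℝ} {k : ℕ} {a : ℝ} {t : Fin k → ℝ} :
    (Fin.cons a t : Fin (k + 1) → ℝ) ∈ cube T (k + 1) ↔ a ∈ Icc 0 T ∧ t ∈ cube T k := by
  simp [cube, Fin.forall_fin_succ]

theorem IsIncrement.cons {V : Type*} [NormedAddCommGroup V] {T : ℝ} {k : ℕ}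
    {h : (Fin (k + 1) → ℝ) → V} (hh : IsIncrement T (k + 1) h) {a : ℝ} (ha : a ∈ Icc 0 T) :
    IsIncrement T k (fun u => h (Fin.cons a u)) := by
  refine ⟨hh.1.comp (by fun_prop) fun u hu => cons_mem_cube.mpr ⟨ha, hu⟩, ?_⟩
  rintro u hu ⟨i, j, hij, hval⟩
  exact hh.2 _ (cons_mem_cube.mpr ⟨ha, hu⟩)
    ⟨i.succ, j.succ, by simp [hij], by simpa using hval⟩

theorem exists_isIncrement_cob_eq {V : Type*} [NormedAddCommGroup V] [NormedSpace ℝ V]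
    {T : ℝ} {k : ℕ} {h : (Fin (k + 1) → ℝ) → V} (hh : IsIncrement T (k + 1) h)
    (hcocycle : ∀ t ∈ cube T (k + 2), cob h t = 0) {a : ℝ} (ha : a ∈ Icc 0 T) :
    ∃ g : (Fin k → ℝ) → V, IsIncrement T k g ∧ ∀ t ∈ cube T (k + 1), cob g t = h t := by
  refine ⟨fun u => h (Fin.cons a u), hh.cons ha, fun t ht => ?_⟩
  have hcone := hcocycle _ (cons_mem_cube.mpr ⟨ha, ht⟩)
  rw [cob_cons, sub_eq_zero] at hcone
  exact hcone.symm

theorem stmt12_general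
    {V : Type*} [NormedAddCommGroup V] [NormedSpace ℝ V]
    (T : ℝ) (hT : 0 < T) (k : ℕ) :
    (∀ g : (Fin k → ℝ) → V, IsIncrement T k g →
      ∀ t ∈ cube T (k + 2), cob (cob g) t = 0) ∧
    (∀ h : (Fin (k + 1) → ℝ) → V, IsIncrement T (k + 1) h →
      (∀ t ∈ cube T (k + 2), cob h t = 0) →
      ∃ g : (Fin k → ℝ) → V, IsIncrement T k g ∧
        ∀ t ∈ cube T (k + 1), cob g t = h t) :=
  ⟨fun g _ t _ => cob_cob g t,
    fun _ hh hcocycle => exists_isIncrement_cob_eq hh hcocycle ⟨le_rfl, hT.le⟩⟩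

/-- **Acyclicity of the complex of increments.**
(i) `δ∘δ = 0` on `𝒞_k(V)`; (ii) every `(k+1)`-increment which is a cocycle is the
coboundary of a `k`-increment. -/
theorem stmt12
    {V : Type*} [NormedAddCommGroup V] [NormedSpace ℝ V]
    (T : ℝ) (hT : 0 < T) (k : ℕ) (hk : 1 ≤ k) :
    (∀ g : (Fin k → ℝ) → V, IsIncrement T k g →
      ∀ t ∈ cube T (k + 2), cob (cob g) t = 0) ∧
    (∀ h : (Fin (k + 1) → ℝ) → V, IsIncrement T (k + 1) h →
      (∀ t ∈ cube T (k + 2), cob h t = 0) →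
      ∃ g : (Fin k → ℝ) → V, IsIncrement T k g ∧
        ∀ t ∈ cube T (k + 1), cob g t = h t) :=
  stmt12_general T hT k
end

section
/- Let φ ∈ C³(ℝ) and a,b,c,d ∈ ℝ. Set Δ = d − c − b + a, Δ₁ = b − a, Δ₂ = c − a, Δ₁′ = d − c, Δ₂′ = d − b, and define ν = −φ′(a)Δ − φ″(a)(½(d² − c² − b² + a²) − aΔ) + (∫₀¹ φ′(a + sΔ₁) ds)·Δ + (∫₀¹ φ″(a + sΔ₁) ds)·Δ₂Δ₁′ + (∫₀¹ φ″(a + sΔ₁)·s ds)·ΔΔ₁′ − (φ′(b) − φ′(a) − φ″(a)Δ₁)·Δ₂′. Then there is a universal constant C, independent of φ and of a,b,c,d, such that |ν| ≤ C ( sup_{ξ∈I} |φ″(ξ)| · Δ² + sup_{ξ∈I} |φ‴(ξ)| · |Δ₁ Δ₂ Δ| ), where I is the closed interval with endpoints a and b. -/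
open Set intervalIntegral

/-! With `Y = ∫₀¹ φ″(a + sΔ₁) ds` and `Z = ∫₀¹ φ″(a + sΔ₁) s ds`, the fundamental theorem of
calculus gives `φ′(b) = φ′(a) + Δ₁ Y` and integration by parts gives
`∫₀¹ φ′(a + sΔ₁) ds = φ′(a) + Δ₁ (Y - Z)`. Substituting these, `ν` collapses to
`(Y - φ″(a)) Δ₂ Δ + (Z - φ″(a)/2) Δ²`. The mean value inequality bounds `|Y - φ″(a)|` by
`sup |φ‴| · |Δ₁|`, and trivially `|Z - φ″(a)/2| ≤ 2 sup |φ″|`, so `C = 2` works. -/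

lemma add_mul_sub_mem_uIcc {a b s : ℝ} (hs : s ∈ Icc (0 : ℝ) 1) : a + s * (b - a) ∈ uIcc a b := by
  simpa [smul_eq_mul] using (convex_uIcc a b).add_smul_sub_mem left_mem_uIcc right_mem_uIcc hs

lemma abs_le_sSup_abs_of_continuousOn {h : ℝ → ℝ} {a b x : ℝ} (hh : ContinuousOn h (uIcc a b))
    (hx : x ∈ uIcc a b) : |h x| ≤ sSup {r : ℝ | ∃ ξ ∈ uIcc a b, r = |h ξ|} := by
  refine le_csSup ?_ ⟨x, hx, rfl⟩
  have himage : {r : ℝ | ∃ ξ ∈ uIcc a b, r = |h ξ|} = (fun ξ => |h ξ|) '' uIcc a b := by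
    ext; simp [eq_comm]
  rw [himage]
  exact (isCompact_uIcc.image_of_continuousOn hh.abs).bddAbove

lemma abs_integral_zero_one_le {F : ℝ → ℝ} {C : ℝ} (h : ∀ s ∈ Icc (0 : ℝ) 1, |F s| ≤ C) :
    |∫ s in (0 : ℝ)..1, F s| ≤ C := by
  have hbound := norm_integral_le_of_norm_le_const (f := F) fun s hs =>
    (Real.norm_eq_abs (F s)).trans_le <|
      h s (Ioc_subset_Icc_self (by rwa [uIoc_of_le zero_le_one] at hs))
  simpa using hbound

section Segment

variable {f : ℝ → ℝ} {a b : ℝ}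

lemma hasDerivAt_comp_add_mul_sub (hf : Differentiable ℝ f) (s : ℝ) :
    HasDerivAt (fun s => f (a + s * (b - a))) (deriv f (a + s * (b - a)) * (b - a)) s := by
  have hγ : HasDerivAt (fun s : ℝ => a + s * (b - a)) (b - a) s := by
    simpa using ((hasDerivAt_id s).mul_const (b - a)).const_add a
  exact (hf _).hasDerivAt.comp s hγ

lemma intervalIntegrable_deriv_comp_add_mul_sub_mul (hf : ContDiff ℝ 1 f) (s₀ s₁ : ℝ) :
    IntervalIntegrable (fun s => deriv f (a + s * (b - a)) * (b - a))
      MeasureTheory.volume s₀ s₁ := by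
  have hcont : Continuous (deriv f) := hf.continuous_deriv le_rfl
  exact Continuous.intervalIntegrable (by fun_prop) s₀ s₁

lemma sub_eq_mul_integral_deriv_comp_add_mul_sub (hf : ContDiff ℝ 1 f) :
    f b - f a = (b - a) * ∫ s in (0 : ℝ)..1, deriv f (a + s * (b - a)) := by
  rw [mul_comm, ← integral_mul_const, integral_eq_sub_of_hasDerivAt
    (fun s _ => hasDerivAt_comp_add_mul_sub (hf.differentiable one_ne_zero) s)
    (intervalIntegrable_deriv_comp_add_mul_sub_mul hf 0 1)]
  simp

lemma integral_comp_add_mul_sub_eq (hf : ContDiff ℝ 1 f) :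
    ∫ s in (0 : ℝ)..1, f (a + s * (b - a))
      = f a + (b - a) * ∫ s in (0 : ℝ)..1, (1 - s) * deriv f (a + s * (b - a)) := by
  have hparts := integral_mul_deriv_eq_deriv_mul (a := 0) (b := 1) (v := fun s : ℝ => s - 1)
    (fun s _ => hasDerivAt_comp_add_mul_sub (a := a) (b := b) (hf.differentiable one_ne_zero) s)
    (fun s _ => (hasDerivAt_id s).sub_const 1)
    (intervalIntegrable_deriv_comp_add_mul_sub_mul hf 0 1) intervalIntegrable_const
  simp only [mul_one, sub_self, mul_zero, zero_sub, zero_mul, add_zero] at hparts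
  rw [hparts, ← integral_const_mul, sub_eq_add_neg, ← integral_neg]
  congr 1
  · ring
  · congr 1; ext s; ring

lemma abs_integral_comp_add_mul_sub_sub_le {M : ℝ} (hf : Differentiable ℝ f)
    (hM : ∀ x ∈ uIcc a b, |deriv f x| ≤ M) :
    |(∫ s in (0 : ℝ)..1, f (a + s * (b - a))) - f a| ≤ M * |b - a| := by
  have hM₀ : 0 ≤ M := (abs_nonneg _).trans (hM a left_mem_uIcc)
  have hcont : Continuous f := hf.continuous
  have hint : IntervalIntegrable (fun s => f (a + s * (b - a))) MeasureTheory.volume 0 1 :=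
    Continuous.intervalIntegrable (by fun_prop) 0 1
  have hconst : f a = ∫ _ in (0 : ℝ)..1, f a := by simp
  rw [hconst, ← integral_sub hint intervalIntegrable_const]
  refine abs_integral_zero_one_le fun s hs => ?_
  have hlip := (convex_uIcc a b).norm_image_sub_le_of_norm_deriv_le (fun y _ => hf y)
    (fun y hy => by simpa only [Real.norm_eq_abs] using hM y hy) left_mem_uIcc
    (add_mul_sub_mem_uIcc hs)
  rw [Real.norm_eq_abs, Real.norm_eq_abs, add_sub_cancel_left, abs_mul, abs_of_nonneg hs.1] at hlip
  calc _ ≤ M * (s * |b - a|) := hlip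
    _ ≤ M * |b - a| := by gcongr; exact mul_le_of_le_one_left (abs_nonneg _) hs.2

lemma abs_integral_comp_add_mul_sub_mul_le {M : ℝ} (hM : ∀ x ∈ uIcc a b, |f x| ≤ M) :
    |∫ s in (0 : ℝ)..1, f (a + s * (b - a)) * s| ≤ M := by
  refine abs_integral_zero_one_le fun s hs => ?_
  have hfs := hM _ (add_mul_sub_mem_uIcc hs)
  rw [abs_mul, abs_of_nonneg hs.1]
  nlinarith [abs_nonneg (f (a + s * (b - a))), hs.2]

lemma abs_integral_comp_add_mul_sub_mul_sub_half_le {M : ℝ} (hM : ∀ x ∈ uIcc a b, |f x| ≤ M) :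
    |(∫ s in (0 : ℝ)..1, f (a + s * (b - a)) * s) - f a / 2| ≤ 2 * M := by
  have hint := abs_integral_comp_add_mul_sub_mul_le hM
  have ha := hM a left_mem_uIcc
  calc _ ≤ |∫ s in (0 : ℝ)..1, f (a + s * (b - a)) * s| + |f a / 2| := abs_sub _ _
    _ ≤ 2 * M := by rw [abs_div, abs_two]; linarith [abs_nonneg (f a)]

end Segment

lemma abs_mul_add_mul_sq_le {X W Δ₁ Δ₂ Δ M₂ M₃ : ℝ} (hM₃ : 0 ≤ M₃) (hX : |X| ≤ M₃ * |Δ₁|)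
    (hW : |W| ≤ 2 * M₂) :
    |X * (Δ₂ * Δ) + W * Δ ^ 2| ≤ 2 * (M₂ * Δ ^ 2 + M₃ * |Δ₁ * Δ₂ * Δ|) := by
  have hXΔ : |X| * |Δ₂ * Δ| ≤ M₃ * |Δ₁| * |Δ₂ * Δ| := by gcongr
  have hWΔ : |W| * Δ ^ 2 ≤ 2 * M₂ * Δ ^ 2 := by gcongr
  calc |X * (Δ₂ * Δ) + W * Δ ^ 2| ≤ |X * (Δ₂ * Δ)| + |W * Δ ^ 2| := abs_add_le _ _
    _ = |X| * |Δ₂ * Δ| + |W| * Δ ^ 2 := by rw [abs_mul, abs_mul W, abs_sq]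
    _ ≤ 2 * (M₂ * Δ ^ 2 + M₃ * |Δ₁ * Δ₂ * Δ|) := by
        rw [mul_assoc Δ₁, abs_mul Δ₁]
        nlinarith [mul_nonneg hM₃ (mul_nonneg (abs_nonneg Δ₁) (abs_nonneg (Δ₂ * Δ)))]

/-- **A quantitative Taylor-type bound (Lemma on `ν₁`).**
For `φ ∈ C³(ℝ)` and corner values `a,b,c,d`, the quantity `ν` defined below satisfies
`|ν| ≤ C (sup_{ξ∈I} |φ″(ξ)| Δ² + sup_{ξ∈I} |φ‴(ξ)| |Δ₁Δ₂Δ|)` where `I` is the closed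
interval with endpoints `a` and `b`, with a universal constant `C`. -/
theorem stmt18 :
    ∃ C : ℝ, ∀ (φ : ℝ → ℝ), ContDiff ℝ 3 φ → ∀ a b c d : ℝ,
      |(-(deriv φ a) * (d - c - b + a)
          - deriv (deriv φ) a * ((d ^ 2 - c ^ 2 - b ^ 2 + a ^ 2) / 2
              - a * (d - c - b + a))
          + (∫ s in (0:ℝ)..1, deriv φ (a + s * (b - a))) * (d - c - b + a)
          + (∫ s in (0:ℝ)..1, deriv (deriv φ) (a + s * (b - a))) * ((c - a) * (d - c))
          + (∫ s in (0:ℝ)..1, deriv (deriv φ) (a + s * (b - a)) * s)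
              * ((d - c - b + a) * (d - c))
          - (deriv φ b - deriv φ a - deriv (deriv φ) a * (b - a)) * (d - b))|
        ≤ C * (sSup {r : ℝ | ∃ ξ ∈ Set.uIcc a b, r = |deriv (deriv φ) ξ|}
                * (d - c - b + a) ^ 2
              + sSup {r : ℝ | ∃ ξ ∈ Set.uIcc a b, r = |deriv (deriv (deriv φ)) ξ|}
                * |(b - a) * (c - a) * (d - c - b + a)|) := by
  refine ⟨2, fun φ hφ a b c d => ?_⟩
  have hφ₁ : ContDiff ℝ 2 (deriv φ) := hφ.deriv'
  have hφ₂ : ContDiff ℝ 1 (deriv (deriv φ)) := hφ₁.deriv'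
  have hφ₃ : Continuous (deriv (deriv (deriv φ))) := hφ₂.continuous_deriv le_rfl
  set Y := ∫ s in (0 : ℝ)..1, deriv (deriv φ) (a + s * (b - a)) with hY
  set Z := ∫ s in (0 : ℝ)..1, deriv (deriv φ) (a + s * (b - a)) * s with hZ
  have hb : deriv φ b = deriv φ a + (b - a) * Y := by
    linarith [sub_eq_mul_integral_deriv_comp_add_mul_sub (a := a) (b := b) (hφ₁.of_le one_le_two)]
  have hI : ∫ s in (0 : ℝ)..1, deriv φ (a + s * (b - a)) = deriv φ a + (b - a) * (Y - Z) := by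
    have hcont : Continuous (deriv (deriv φ)) := hφ₂.continuous
    rw [integral_comp_add_mul_sub_eq (hφ₁.of_le one_le_two), hY, hZ,
      ← integral_sub (Continuous.intervalIntegrable (by fun_prop) 0 1)
        (Continuous.intervalIntegrable (by fun_prop) 0 1)]
    congr 2
    exact integral_congr fun s _ => by ring
  set M₂ := sSup {r : ℝ | ∃ ξ ∈ uIcc a b, r = |deriv (deriv φ) ξ|}
  set M₃ := sSup {r : ℝ | ∃ ξ ∈ uIcc a b, r = |deriv (deriv (deriv φ)) ξ|}
  have hM₂ : ∀ x ∈ uIcc a b, |deriv (deriv φ) x| ≤ M₂ := fun x hx =>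
    abs_le_sSup_abs_of_continuousOn hφ₂.continuous.continuousOn hx
  have hM₃ : ∀ x ∈ uIcc a b, |deriv (deriv (deriv φ)) x| ≤ M₃ := fun x hx =>
    abs_le_sSup_abs_of_continuousOn hφ₃.continuousOn hx
  calc |_| = |(Y - deriv (deriv φ) a) * ((c - a) * (d - c - b + a))
        + (Z - deriv (deriv φ) a / 2) * (d - c - b + a) ^ 2| := by
        congr 1; rw [hb, hI]; ring
    _ ≤ _ := abs_mul_add_mul_sq_le ((abs_nonneg _).trans (hM₃ a left_mem_uIcc))
        (abs_integral_comp_add_mul_sub_sub_le (hφ₂.differentiable one_ne_zero) hM₃)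
        (abs_integral_comp_add_mul_sub_mul_sub_half_le hM₂)
end
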